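/- arXiv:quant-ph/9908070 — 10 statements merged into one kernel-verified Lean document; each statement's English description precedes it below -/
import Mathlib

section
/- Let h = (1/2)√(1+√5), N = 2/√(5+√5), and for i = 0,...,4 define vectors v_i = N(cos(2πi/5), sin(2πi/5), h) in ℝ³. Then each v_i is a unit vector, and v_i is orthogonal to v_j whenever i - j ≡ ±2 (mod 5). -/
/-- Height of the pentagonal pyramid. -/
noncomputable def pyrH : ℝ := (1/2) * Real.sqrt (1 + Real.sqrt 5)

/-- Normalization constant. -/
noncomputable def pyrN : ℝ := 2 / Real.sqrt (5 + Real.sqrt 5)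

/-- The Pyramid vectors in ℝ³. -/
noncomputable def pyrV (i : Fin 5) : EuclideanSpace ℝ (Fin 3) :=
  !₂[pyrN * Real.cos (2 * Real.pi * (i : ℕ) / 5),
    pyrN * Real.sin (2 * Real.pi * (i : ℕ) / 5),
    pyrN * pyrH]

/-!
Writing `v_i = N (cos aᵢ, sin aᵢ, h)` gives `⟪v_i, v_j⟫ = N² (cos (aᵢ - aⱼ) + h²)`. For nonadjacent
vertices `aᵢ - aⱼ ≡ ±4π/5 (mod 2π)`, and `cos (4π/5) = -(1 + √5)/4 = -h²`, so the inner product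
vanishes; on the diagonal it is `N² (1 + h²) = 4/(5 + √5) · (5 + √5)/4 = 1`.
-/

open Real

noncomputable def pyramidEdge (N h a : ℝ) : EuclideanSpace ℝ (Fin 3) :=
  !₂[N * cos a, N * sin a, N * h]

lemma pyrV_eq_pyramidEdge (i : Fin 5) : pyrV i = pyramidEdge pyrN pyrH (2 * π * (i : ℕ) / 5) :=
  rfl

lemma inner_pyramidEdge (N h a b : ℝ) :
    inner ℝ (pyramidEdge N h a) (pyramidEdge N h b) = N ^ 2 * (cos (a - b) + h ^ 2) := by
  simp only [pyramidEdge, PiLp.inner_apply, RCLike.inner_apply, conj_trivial, Fin.sum_univ_three,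
    Matrix.cons_val_zero, Matrix.cons_val_one, Matrix.cons_val_two, Matrix.head_cons,
    Matrix.tail_cons, cos_sub]
  ring

lemma norm_pyramidEdge_sq (N h a : ℝ) : ‖pyramidEdge N h a‖ ^ 2 = N ^ 2 * (1 + h ^ 2) := by
  rw [← real_inner_self_eq_norm_sq, inner_pyramidEdge, sub_self, cos_zero]

lemma cos_two_pi_mul_div_five_of_modEq_two {k : ℤ} (hk : k ≡ 2 [ZMOD 5]) :
    cos (2 * π * k / 5) = cos (4 * π / 5) := by
  obtain ⟨m, hm⟩ := (Int.modEq_iff_add_fac.mp hk.symm)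
  rw [hm, ← cos_add_int_mul_two_pi (4 * π / 5) m]
  push_cast
  ring_nf

lemma cos_four_pi_div_five : cos (4 * π / 5) = -((1 + √5) / 4) := by
  rw [show 4 * π / 5 = π - π / 5 by ring, cos_pi_sub, cos_pi_div_five]

lemma pyrH_sq : pyrH ^ 2 = (1 + √5) / 4 := by
  rw [pyrH, mul_pow, sq_sqrt (by positivity)]
  ring

lemma pyrN_sq : pyrN ^ 2 = 4 / (5 + √5) := by
  rw [pyrN, div_pow, sq_sqrt (by positivity)]
  norm_num

lemma pyrN_sq_mul_one_add_pyrH_sq : pyrN ^ 2 * (1 + pyrH ^ 2) = 1 := by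
  rw [pyrN_sq, pyrH_sq]
  field_simp
  ring

lemma inner_pyrV_of_modEq_two {i j : Fin 5} (hij : (j : ℤ) - i ≡ 2 [ZMOD 5]) :
    inner ℝ (pyrV i) (pyrV j) = 0 := by
  have hcos : cos (2 * π * (i : ℕ) / 5 - 2 * π * (j : ℕ) / 5) = cos (4 * π / 5) := by
    rw [← cos_neg, ← cos_two_pi_mul_div_five_of_modEq_two hij]
    push_cast
    ring_nf
  rw [pyrV_eq_pyramidEdge, pyrV_eq_pyramidEdge, inner_pyramidEdge, hcos, cos_four_pi_div_five,
    pyrH_sq]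
  ring

theorem stmt0 :
    (∀ i : Fin 5, ‖pyrV i‖ = 1) ∧
    (∀ i j : Fin 5, (((i : ℕ) + 2) % 5 = (j : ℕ) ∨ ((j : ℕ) + 2) % 5 = (i : ℕ)) →
      (inner ℝ (pyrV i) (pyrV j) : ℝ) = 0) := by
  refine ⟨fun i => ?_, fun i j hij => ?_⟩
  · rw [← pow_eq_one_iff_of_nonneg (norm_nonneg _) two_ne_zero, pyrV_eq_pyramidEdge,
      norm_pyramidEdge_sq, pyrN_sq_mul_one_add_pyrH_sq]
  · rcases hij with h | h
    · exact inner_pyrV_of_modEq_two (by rw [Int.ModEq]; omega)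
    · rw [real_inner_comm]
      exact inner_pyrV_of_modEq_two (by rw [Int.ModEq]; omega)
end

section
/- There is no product vector a ⊗ b in ℂ³ ⊗ ℂ³ (with a, b nonzero) orthogonal to all five Pyramid states ψ_i = v_i ⊗ v_{2i mod 5}, i = 0,...,4. -/
/-- The Pyramid vectors, regarded as vectors in ℂ³. -/
noncomputable def pyrVC (i : Fin 5) : EuclideanSpace ℂ (Fin 3) :=
  WithLp.toLp 2 (![(pyrN * Real.cos (2 * Real.pi * (i : ℕ) / 5) : ℝ),
    (pyrN * Real.sin (2 * Real.pi * (i : ℕ) / 5) : ℝ),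
    (pyrN * pyrH : ℝ)] : Fin 3 → ℂ)

/-!
With `θᵢ = 2πi/5`, the matrix with rows `vᵢ, vⱼ, vₖ` has determinant
`N³h (sin (θⱼ - θᵢ) + sin (θₖ - θⱼ) + sin (θᵢ - θₖ))
  = 4N³h sin ((θⱼ - θᵢ)/2) sin ((θₖ - θⱼ)/2) sin ((θₖ - θᵢ)/2)`,
which vanishes only if two of `i, j, k` coincide. Hence a nonzero vector is orthogonal to at most
two Pyramid vectors. As `i ↦ 2i` permutes `ℤ/5`, the conditions `⟨a, vᵢ⟩ = 0` and
`⟨b, v₂ᵢ⟩ = 0` can then cover at most `2 + 2 < 5` indices.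
-/

open Real Finset Matrix

theorem sin_add_sin_sub_sin_add (x y : ℝ) :
    sin x + sin y - sin (x + y) = 4 * sin (x / 2) * sin (y / 2) * sin ((x + y) / 2) := by
  have h := cos_sub_cos ((x - y) / 2) ((x + y) / 2)
  have hsum : sin (x + y) = 2 * sin ((x + y) / 2) * cos ((x + y) / 2) := by
    rw [← sin_two_mul]; ring_nf
  rw [sin_add_sin, hsum]
  rw [show ((x - y) / 2 + (x + y) / 2) / 2 = x / 2 by ring,
    show ((x - y) / 2 - (x + y) / 2) / 2 = -(y / 2) by ring, sin_neg] at h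
  linear_combination 2 * sin ((x + y) / 2) * h

theorem sin_pi_mul_div_ne_zero {m n : ℤ} (hn : n ≠ 0) (h : ¬ n ∣ m) : sin (π * m / n) ≠ 0 := by
  rw [Ne, sin_eq_zero_iff]
  rintro ⟨k, hk⟩
  field_simp at hk
  exact h ⟨k, by rw [mul_comm]; exact_mod_cast hk.symm⟩

theorem sin_pi_mul_sub_div_ne_zero {n : ℕ} {i j : Fin n} (hij : i ≠ j) :
    sin (π * ((j : ℕ) - (i : ℕ) : ℤ) / (n : ℤ)) ≠ 0 := by
  have hval : (i : ℕ) ≠ j := Fin.val_ne_of_ne hij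
  refine sin_pi_mul_div_ne_zero (by have := i.pos; omega) fun hdvd => hval ?_
  have hdiff := Int.eq_zero_of_abs_lt_dvd hdvd (by rw [abs_lt]; omega)
  omega

theorem sin_sub_add_sin_sub_add_sin_sub_ne_zero {n : ℕ} {i j k : Fin n}
    (hij : i ≠ j) (hjk : j ≠ k) (hik : i ≠ k) :
    sin (2 * π * (j : ℕ) / n - 2 * π * (i : ℕ) / n)
      + sin (2 * π * (k : ℕ) / n - 2 * π * (j : ℕ) / n)
      + sin (2 * π * (i : ℕ) / n - 2 * π * (k : ℕ) / n) ≠ 0 := by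
  set x := 2 * π * (j : ℕ) / n - 2 * π * (i : ℕ) / n
  set y := 2 * π * (k : ℕ) / n - 2 * π * (j : ℕ) / n
  have hx := sin_pi_mul_sub_div_ne_zero hij
  have hy := sin_pi_mul_sub_div_ne_zero hjk
  have hxy := sin_pi_mul_sub_div_ne_zero hik
  push_cast at hx hy hxy
  rw [show 2 * π * (i : ℕ) / n - 2 * π * (k : ℕ) / n = -(x + y) by ring, sin_neg,
    ← sub_eq_add_neg, sin_add_sin_sub_sin_add]
  rw [show x / 2 = π * ((j : ℕ) - (i : ℕ)) / n by ring,
    show y / 2 = π * ((k : ℕ) - (j : ℕ)) / n by ring,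
    show (x + y) / 2 = π * ((k : ℕ) - (i : ℕ)) / n by ring]
  exact mul_ne_zero (mul_ne_zero (mul_ne_zero four_ne_zero hx) hy) hxy

theorem eq_zero_of_forall_inner_eq_zero_of_det_ne_zero {𝕜 ι : Type*} [RCLike 𝕜] [Fintype ι]
    [DecidableEq ι] {v : ι → EuclideanSpace 𝕜 ι} (hv : (Matrix.of fun r => (v r).ofLp).det ≠ 0)
    {a : EuclideanSpace 𝕜 ι} (ha : ∀ r, inner 𝕜 a (v r) = 0) : a = 0 := by
  have hmul : (Matrix.of fun r => (v r).ofLp) *ᵥ star a.ofLp = 0 := funext fun r => by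
    simpa [mulVec, dotProduct, PiLp.inner_apply, mul_comm] using ha r
  have hstar := eq_zero_of_mulVec_eq_zero hv hmul
  ext m
  simpa using congrFun hstar m

theorem pyrH_pos : 0 < pyrH := by unfold pyrH; positivity

theorem pyrN_pos : 0 < pyrN := by unfold pyrN; positivity

theorem det_pyrVC (i j k : Fin 5) :
    (Matrix.of fun r => (pyrVC (![i, j, k] r)).ofLp).det =
      ((pyrN ^ 3 * pyrH * (sin (2 * π * (j : ℕ) / 5 - 2 * π * (i : ℕ) / 5)
        + sin (2 * π * (k : ℕ) / 5 - 2 * π * (j : ℕ) / 5)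
        + sin (2 * π * (i : ℕ) / 5 - 2 * π * (k : ℕ) / 5)) : ℝ) : ℂ) := by
  simp only [det_fin_three, pyrVC, of_apply, cons_val_zero, cons_val_one, Matrix.cons_val, sin_sub,
    Complex.ofReal_mul, Complex.ofReal_add, Complex.ofReal_sub, Complex.ofReal_pow]
  ring

theorem card_filter_inner_pyrVC_eq_zero_le_two {a : EuclideanSpace ℂ (Fin 3)} (ha : a ≠ 0) :
    #{i | inner ℂ a (pyrVC i) = 0} ≤ 2 := by
  by_contra! h
  obtain ⟨i, hi, j, hj, k, hk, hij, hik, hjk⟩ := two_lt_card.mp h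
  simp only [mem_filter, mem_univ, true_and] at hi hj hk
  refine ha (eq_zero_of_forall_inner_eq_zero_of_det_ne_zero
    (v := fun r => pyrVC (![i, j, k] r)) ?_ ?_)
  · rw [det_pyrVC]
    have hsin := sin_sub_add_sin_sub_add_sin_sub_ne_zero hij hjk hik
    push_cast at hsin
    exact_mod_cast mul_ne_zero (by have := pyrN_pos; have := pyrH_pos; positivity) hsin
  · simp [Fin.forall_fin_succ, hi, hj, hk]

/-- No nonzero product vector a ⊗ b in ℂ³ ⊗ ℂ³ is orthogonal to all five Pyramid
states ψ_i = v_i ⊗ v_{2i mod 5}: a ⊗ b ⊥ v_i ⊗ v_{2i mod 5} iff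
⟨a, v_i⟩ = 0 or ⟨b, v_{2i mod 5}⟩ = 0. -/
theorem stmt3 :
    ¬ ∃ (a b : EuclideanSpace ℂ (Fin 3)), a ≠ 0 ∧ b ≠ 0 ∧
      ∀ i : Fin 5, (inner ℂ a (pyrVC i) : ℂ) = 0 ∨ (inner ℂ b (pyrVC (2 * i)) : ℂ) = 0 := by
  rintro ⟨a, b, ha, hb, h⟩
  have hcover : (univ : Finset (Fin 5)) ⊆
      ({i | inner ℂ a (pyrVC i) = 0} : Finset (Fin 5)) ∪
        ({i | inner ℂ b (pyrVC (2 * i)) = 0} : Finset (Fin 5)) := by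
    intro i _
    simpa using h i
  have hdouble : #{i | inner ℂ b (pyrVC (2 * i)) = 0} ≤ #{j | inner ℂ b (pyrVC j) = 0} :=
    card_le_card_of_injOn (2 * ·) (by intro i; simp)
      (Function.Injective.injOn (by decide : Function.Injective fun i : Fin 5 => 2 * i))
  have hcard := (card_le_card hcover).trans (card_union_le _ _)
  rw [card_univ, Fintype.card_fin] at hcard
  have ha2 := card_filter_inner_pyrVC_eq_zero_le_two ha
  have hb2 := card_filter_inner_pyrVC_eq_zero_le_two hb
  omega
end

section
/- Let S = {ψ_j = ⊗_{i=1}^m φ_{i,j} : j = 1,...,n} be a set of mutually orthogonal product vectors in H = ⊗_{i=1}^m H_i with dim H_i = d_i. If n ≤ Σ_i (d_i − 1), then S is extendible: there exists a nonzero product vector in H orthogonal to every member of S. -/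
/-!
Distribute the n vectors among the m factors so that factor i receives at most d_i − 1 of them.
In each factor the assigned vectors φ_{i,j} span a proper subspace of ℂ^{d_i}, so some nonzero χ_i
is orthogonal to all of them; then ⊗_i χ_i is orthogonal to every ψ_j through the factor that
received j.
-/

open Finset

theorem Fintype.exists_fiber_card_le {ι : Type*} [Fintype ι] [DecidableEq ι] (n : ℕ) (c : ι → ℕ)
    (h : n ≤ ∑ i, c i) : ∃ f : Fin n → ι, ∀ i, #{j | f j = i} ≤ c i := by
  obtain ⟨e⟩ : Nonempty (Fin n ↪ Σ i, Fin (c i)) :=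
    Function.Embedding.nonempty_of_card_le (by simpa using h)
  refine ⟨fun j => (e j).1, fun i => ?_⟩
  calc #{j | (e j).1 = i} ≤ #(univ.map (Function.Embedding.sigmaMk (β := fun i => Fin (c i)) i)) := by
        refine card_le_card_of_injOn e (fun j hj => ?_) e.injective.injOn
        simp only [coe_filter, mem_univ, true_and, Set.mem_ofPred_eq] at hj
        generalize e j = x at hj ⊢
        obtain ⟨k, a⟩ := x
        subst hj
        simp
    _ = c i := by simp

theorem exists_ne_zero_forall_inner_eq_zero {𝕜 E κ : Type*} [RCLike 𝕜] [NormedAddCommGroup E]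
    [InnerProductSpace 𝕜 E] [FiniteDimensional 𝕜 E] (v : κ → E) (s : Finset κ)
    (hs : #s < Module.finrank 𝕜 E) : ∃ χ : E, χ ≠ 0 ∧ ∀ j ∈ s, inner 𝕜 χ (v j) = 0 := by
  classical
  let K := Submodule.span 𝕜 (s.image v : Set E)
  have hK : K ≠ ⊤ := by
    intro hK
    have hKs : Module.finrank 𝕜 K ≤ #s :=
      (finrank_span_finset_le_card (s.image v)).trans card_image_le
    rw [hK, finrank_top] at hKs
    omega
  obtain ⟨χ, hχK, hχ⟩ := Submodule.exists_mem_ne_zero_of_ne_bot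
    (mt Submodule.orthogonal_eq_bot_iff.mp hK)
  exact ⟨χ, hχ, fun j hj => (Submodule.mem_orthogonal' K χ).mp hχK _
    (Submodule.subset_span (mem_coe.mpr (mem_image_of_mem v hj)))⟩

theorem stmt4_general (m n : ℕ) (d : Fin m → ℕ) (hd : ∀ i, 0 < d i)
    (φ : (i : Fin m) → Fin n → EuclideanSpace ℂ (Fin (d i)))
    (hcount : n ≤ ∑ i, (d i - 1)) :
    ∃ χ : (i : Fin m) → EuclideanSpace ℂ (Fin (d i)),
      (∀ i, χ i ≠ 0) ∧ ∀ j, ∃ i, (inner ℂ (χ i) (φ i j) : ℂ) = 0 := by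
  obtain ⟨f, hf⟩ := Fintype.exists_fiber_card_le n (fun i => d i - 1) hcount
  have hχ (i : Fin m) : ∃ χ : EuclideanSpace ℂ (Fin (d i)),
      χ ≠ 0 ∧ ∀ j ∈ ({j | f j = i} : Finset (Fin n)), inner ℂ χ (φ i j) = 0 :=
    exists_ne_zero_forall_inner_eq_zero (φ i) _ <| by
      rw [finrank_euclideanSpace_fin]
      exact (hf i).trans_lt (Nat.sub_lt (hd i) one_pos)
  choose χ hχ0 hχφ using hχ
  exact ⟨χ, hχ0, fun j => ⟨f j, hχφ (f j) j (by simp)⟩⟩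

/-- Counting lemma: a set of n mutually orthogonal (nonzero) product vectors
ψ_j = ⊗_i φ_{i,j} in ⊗_i ℂ^{d_i} with n ≤ Σ_i (d_i − 1) is extendible: there is a
nonzero product vector ⊗_i χ_i orthogonal to every member (a product vector is
orthogonal to ψ_j iff some factor inner product ⟨χ_i, φ_{i,j}⟩ vanishes). -/
theorem stmt4 (m n : ℕ) (d : Fin m → ℕ) (hd : ∀ i, 0 < d i)
    (φ : (i : Fin m) → Fin n → EuclideanSpace ℂ (Fin (d i)))
    (hne : ∀ i j, φ i j ≠ 0)
    (horth : ∀ j k : Fin n, j ≠ k → ∃ i, (inner ℂ (φ i j) (φ i k) : ℂ) = 0)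
    (hcount : n ≤ ∑ i, (d i - 1)) :
    ∃ χ : (i : Fin m) → EuclideanSpace ℂ (Fin (d i)),
      (∀ i, χ i ≠ 0) ∧ ∀ j, ∃ i, (inner ℂ (χ i) (φ i j) : ℂ) = 0 :=
  stmt4_general m n d hd φ hcount
end

section
/- Let S = {ψ_j = ⊗_{i=1}^m φ_{i,j}} be an orthogonal product basis in H = ⊗_i H_i with dim H_i = d_i. Then S is extendible (some nonzero product vector in H is orthogonal to all of S) if and only if there exists a partition of S into m disjoint subsets S_1,...,S_m such that for every i, the span of {φ_{i,j} : ψ_j ∈ S_i} has dimension strictly less than d_i. -/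
open Module Submodule
open scoped InnerProductSpace

/-! A product vector `⊗ χ_i` is orthogonal to `ψ_j = ⊗ φ_{i,j}` iff `χ_i ⊥ φ_{i,j}` for some
party `i`; recording one such `i` for every `j` is the partition. For a fixed party, a nonzero
`χ_i` orthogonal to the `φ_{i,j}` of its block exists iff their span is a proper subspace of
`ℂ^{d_i}`, i.e. has dimension `< d_i`. -/

section

variable {𝕜 E : Type*} [RCLike 𝕜] [NormedAddCommGroup E] [InnerProductSpace 𝕜 E]

theorem mem_orthogonal_span_iff (s : Set E) (x : E) :
    x ∈ (span 𝕜 s)ᗮ ↔ ∀ v ∈ s, ⟪x, v⟫_𝕜 = 0 := by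
  rw [mem_orthogonal']
  exact ⟨fun h v hv => h v (subset_span hv),
    fun h u hu => span_le (p := LinearMap.ker (innerₛₗ 𝕜 x)).2 h hu⟩

theorem exists_ne_zero_forall_inner_eq_zero_iff_finrank_span_lt [FiniteDimensional 𝕜 E]
    (s : Set E) :
    (∃ x : E, x ≠ 0 ∧ ∀ v ∈ s, ⟪x, v⟫_𝕜 = 0) ↔ finrank 𝕜 (span 𝕜 s) < finrank 𝕜 E := by
  have : (∃ x : E, x ≠ 0 ∧ ∀ v ∈ s, ⟪x, v⟫_𝕜 = 0) ↔ (span 𝕜 s)ᗮ ≠ ⊥ := by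
    simp_rw [Submodule.ne_bot_iff, mem_orthogonal_span_iff, and_comm]
  rw [this, Ne, orthogonal_eq_bot_iff]
  exact ⟨finrank_lt, fun h => (lt_top_of_finrank_lt_finrank h).ne⟩

end

theorem exists_pi_forall_exists_iff_exists_assignment {ι κ : Type*} {α : ι → Type*}
    (p : ∀ i, α i → Prop) (r : ∀ i, α i → κ → Prop) :
    (∃ x : ∀ i, α i, (∀ i, p i (x i)) ∧ ∀ j, ∃ i, r i (x i) j) ↔
      ∃ P : κ → ι, ∀ i, ∃ y, p i y ∧ ∀ j, P j = i → r i y j := by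
  constructor
  · rintro ⟨x, hp, hr⟩
    choose P hP using hr
    exact ⟨P, fun i => ⟨x i, hp i, fun j hj => hj ▸ hP j⟩⟩
  · rintro ⟨P, h⟩
    choose x hp hr using h
    exact ⟨x, hp, fun j => ⟨P j, hr (P j) j rfl⟩⟩

theorem stmt5_general (m n : ℕ) (d : Fin m → ℕ)
    (φ : (i : Fin m) → Fin n → EuclideanSpace ℂ (Fin (d i))) :
    (∃ χ : (i : Fin m) → EuclideanSpace ℂ (Fin (d i)),
        (∀ i, χ i ≠ 0) ∧ ∀ j, ∃ i, (inner ℂ (χ i) (φ i j) : ℂ) = 0)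
    ↔ ∃ P : Fin n → Fin m, ∀ i,
        Module.finrank ℂ (Submodule.span ℂ ((φ i) '' {j | P j = i})) < d i := by
  rw [exists_pi_forall_exists_iff_exists_assignment (fun _ x => x ≠ 0)
    (fun i x j => inner ℂ x (φ i j) = 0)]
  refine exists_congr fun P => forall_congr' fun i => ?_
  simpa only [Set.forall_mem_image, Set.mem_ofPred_eq, finrank_euclideanSpace_fin] using
    exists_ne_zero_forall_inner_eq_zero_iff_finrank_span_lt (𝕜 := ℂ) (φ i '' {j | P j = i})

/-- Partition criterion for extendibility: an orthogonal product basis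
S = {ψ_j = ⊗_i φ_{i,j}} in ⊗_i ℂ^{d_i} is extendible (some nonzero product vector
is orthogonal to all of S) iff there is a partition of S into m subsets
S_i = {j | P j = i} such that for every party i the span of {φ_{i,j} : j ∈ S_i}
has dimension strictly less than d_i. -/
theorem stmt5 (m n : ℕ) (d : Fin m → ℕ) (hd : ∀ i, 0 < d i)
    (φ : (i : Fin m) → Fin n → EuclideanSpace ℂ (Fin (d i)))
    (hne : ∀ i j, φ i j ≠ 0)
    (horth : ∀ j k : Fin n, j ≠ k → ∃ i, (inner ℂ (φ i j) (φ i k) : ℂ) = 0) :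
    (∃ χ : (i : Fin m) → EuclideanSpace ℂ (Fin (d i)),
        (∀ i, χ i ≠ 0) ∧ ∀ j, ∃ i, (inner ℂ (χ i) (φ i j) : ℂ) = 0)
    ↔ ∃ P : Fin n → Fin m, ∀ i,
        Module.finrank ℂ (Submodule.span ℂ ((φ i) '' {j | P j = i})) < d i :=
  stmt5_general m n d φ
end

section
/- Let S be a UPB with n members in a bipartite Hilbert space H_A ⊗ H_B of total dimension D, and let ρ̄ = (1/(D−n))(I − Σ_j |ψ_j⟩⟨ψ_j|) be the normalized projector onto the orthogonal complement of span(S). Then the partial transpose of ρ̄ is positive semidefinite. -/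
open scoped ComplexOrder

/-! Partial transposition sends the projector onto a product vector `a ⊗ b` to the projector onto
`a ⊗ b̄`, and these conjugated product vectors are still orthonormal, since
`⟪a ⊗ b̄, a' ⊗ b̄'⟫ = ⟪a, a'⟫ · conj ⟪b, b'⟫` vanishes exactly when `⟪a, a'⟫ ⟪b, b'⟫` does.
Hence the partial transpose of `I − ∑ⱼ |ψⱼ⟩⟨ψⱼ|` is again `I` minus an orthogonal projection,
which is positive semidefinite. -/

namespace Matrix

variable {ι κ m R : Type*}

def prodVec [Mul R] (a : ι → R) (b : κ → R) : ι × κ → R := fun p => a p.1 * b p.2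

def partialTranspose [Semiring R] : Matrix (ι × κ) (ι × κ) R →ₗ[R] Matrix (ι × κ) (ι × κ) R where
  toFun M p q := M (p.1, q.2) (q.1, p.2)
  map_add' _ _ := rfl
  map_smul' _ _ := rfl

@[simp]
theorem partialTranspose_apply [Semiring R] (M : Matrix (ι × κ) (ι × κ) R) (p q : ι × κ) :
    partialTranspose M p q = M (p.1, q.2) (q.1, p.2) := rfl

@[simp]
theorem partialTranspose_one [Semiring R] [DecidableEq ι] [DecidableEq κ] :
    partialTranspose (1 : Matrix (ι × κ) (ι × κ) R) = 1 := by
  ext p q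
  simp only [partialTranspose_apply, one_apply, Prod.ext_iff, eq_comm (a := p.2)]

section CommRing

variable [CommRing R] [StarRing R]

theorem partialTranspose_vecMulVec_prodVec (a : ι → R) (b : κ → R) :
    partialTranspose (vecMulVec (prodVec a b) (star (prodVec a b))) =
      vecMulVec (prodVec a (star b)) (star (prodVec a (star b))) := by
  ext p q
  simp only [partialTranspose_apply, prodVec, vecMulVec_apply,
    Pi.star_apply, star_mul', star_star]
  ring

theorem star_prodVec_dotProduct_prodVec [Fintype ι] [Fintype κ] (a a' : ι → R) (b b' : κ → R) :
    star (prodVec a b) ⬝ᵥ prodVec a' b' = (star a ⬝ᵥ a') * (star b ⬝ᵥ b') := by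
  simp only [dotProduct, prodVec, Fintype.sum_prod_type, Finset.sum_mul_sum, Pi.star_apply,
    star_mul']
  refine Finset.sum_congr rfl fun _ _ => Finset.sum_congr rfl fun _ _ => ?_
  ring

theorem orthonormal_prodVec_star [NoZeroDivisors R] [Fintype ι] [Fintype κ] [DecidableEq m]
    {a : m → ι → R} {b : m → κ → R}
    (h : ∀ j k, star (prodVec (a j) (b j)) ⬝ᵥ prodVec (a k) (b k) = if j = k then 1 else 0)
    (j k : m) :
    star (prodVec (a j) (star (b j))) ⬝ᵥ prodVec (a k) (star (b k)) = if j = k then 1 else 0 := by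
  have hjk := h j k
  rw [star_prodVec_dotProduct_prodVec] at hjk ⊢
  rw [star_dotProduct_star, dotProduct_comm (b k)]
  split_ifs at hjk ⊢ with hj
  · subst hj
    rwa [← star_dotProduct]
  · rcases mul_eq_zero.mp hjk with hzero | hzero <;> simp [hzero]

end CommRing

theorem posSemidef_one_sub_sum_vecMulVec [Ring R] [PartialOrder R] [StarRing R]
    [StarOrderedRing R] [Fintype ι] [DecidableEq ι]
    [Fintype m] [DecidableEq m] (φ : m → ι → R)
    (h : ∀ j k, star (φ j) ⬝ᵥ φ k = if j = k then 1 else 0) :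
    (1 - ∑ j, vecMulVec (φ j) (star (φ j))).PosSemidef := by
  set Φ : Matrix ι m R := of fun i j => φ j i
  have hΦ : Φᴴ * Φ = 1 := by
    ext j k
    simpa [mul_apply, one_apply, dotProduct, Φ] using h j k
  have hP : ∑ j, vecMulVec (φ j) (star (φ j)) = Φ * Φᴴ := by
    ext p q
    simp [mul_apply, vecMulVec_apply, sum_apply, Φ]
  have hidem : Φ * Φᴴ * (Φ * Φᴴ) = Φ * Φᴴ := by
    rw [Matrix.mul_assoc, ← Matrix.mul_assoc Φᴴ, hΦ, Matrix.one_mul]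
  have hQ : (1 - Φ * Φᴴ)ᴴ * (1 - Φ * Φᴴ) = 1 - Φ * Φᴴ := by
    rw [conjTranspose_sub, conjTranspose_one, conjTranspose_mul, conjTranspose_conjTranspose,
      sub_mul, mul_sub, mul_sub, hidem]
    simp
  rw [hP, ← hQ]
  exact posSemidef_conjTranspose_mul_self _

end Matrix

open Matrix in
theorem stmt6_general (dA dB n : ℕ)
    (α : Fin n → EuclideanSpace ℂ (Fin dA)) (β : Fin n → EuclideanSpace ℂ (Fin dB))
    (ψ : Fin n → (Fin dA × Fin dB) → ℂ)
    (hψ : ∀ j p, ψ j p = α j p.1 * β j p.2)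
    (horthonormal : ∀ j k, (∑ p : Fin dA × Fin dB, (starRingEnd ℂ) (ψ j p) * ψ k p)
        = if j = k then 1 else 0)
    (ρ : Matrix (Fin dA × Fin dB) (Fin dA × Fin dB) ℂ)
    (hρ : ρ = (((dA * dB - n : ℕ) : ℂ))⁻¹ •
        ((1 : Matrix (Fin dA × Fin dB) (Fin dA × Fin dB) ℂ)
          - ∑ j, Matrix.vecMulVec (ψ j) (star (ψ j))))
    (ρPT : Matrix (Fin dA × Fin dB) (Fin dA × Fin dB) ℂ)
    (hPT : ∀ p q, ρPT p q = ρ (p.1, q.2) (q.1, p.2)) :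
    ρPT.PosSemidef := by
  have hψ' : ψ = fun j => prodVec (α j) (β j) := funext fun j => funext (hψ j)
  subst hψ'
  have hρPT : ρPT = partialTranspose ρ := Matrix.ext hPT
  have hnonneg : (0 : ℂ) ≤ ((dA * dB - n : ℕ) : ℂ)⁻¹ := by positivity
  rw [hρPT, hρ, map_smul, map_sub, partialTranspose_one, map_sum]
  simp only [partialTranspose_vecMulVec_prodVec]
  exact (posSemidef_one_sub_sum_vecMulVec _ (orthonormal_prodVec_star horthonormal)).smul hnonneg

/-- For a UPB S = {ψ_j = α_j ⊗ β_j} (n orthonormal product states in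
ℂ^{dA} ⊗ ℂ^{dB}, with no nonzero product vector orthogonal to all of them),
the state ρ̄ = (1/(D−n))(I − Σ_j |ψ_j⟩⟨ψ_j|) has positive semidefinite
partial transpose. -/
theorem stmt6 (dA dB n : ℕ)
    (α : Fin n → EuclideanSpace ℂ (Fin dA)) (β : Fin n → EuclideanSpace ℂ (Fin dB))
    (ψ : Fin n → (Fin dA × Fin dB) → ℂ)
    (hψ : ∀ j p, ψ j p = α j p.1 * β j p.2)
    (horthonormal : ∀ j k, (∑ p : Fin dA × Fin dB, (starRingEnd ℂ) (ψ j p) * ψ k p)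
        = if j = k then 1 else 0)
    (hupb : ¬ ∃ (a : EuclideanSpace ℂ (Fin dA)) (b : EuclideanSpace ℂ (Fin dB)),
        a ≠ 0 ∧ b ≠ 0 ∧ ∀ j, (inner ℂ a (α j) : ℂ) = 0 ∨ (inner ℂ b (β j) : ℂ) = 0)
    (hn : n < dA * dB)
    (ρ : Matrix (Fin dA × Fin dB) (Fin dA × Fin dB) ℂ)
    (hρ : ρ = (((dA * dB - n : ℕ) : ℂ))⁻¹ •
        ((1 : Matrix (Fin dA × Fin dB) (Fin dA × Fin dB) ℂ)
          - ∑ j, Matrix.vecMulVec (ψ j) (star (ψ j))))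
    (ρPT : Matrix (Fin dA × Fin dB) (Fin dA × Fin dB) ℂ)
    (hPT : ∀ p q, ρPT p q = ρ (p.1, q.2) (q.1, p.2)) :
    ρPT.PosSemidef :=
  stmt6_general dA dB n α β ψ hψ horthonormal ρ hρ ρPT hPT
end

section
/- Let S be a UPB in a bipartite Hilbert space H = H_A ⊗ H_B. Then the state ρ̄ proportional to the projector onto span(S)^⊥ is entangled, i.e., ρ̄ is not a convex combination of projectors onto product states. -/
/-!
The ψ_j are orthonormal, so ρ̄ annihilates each of them. If ρ̄ = ∑ pᵢ |aᵢ ⊗ bᵢ⟩⟨aᵢ ⊗ bᵢ| with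
pᵢ ≥ 0, then 0 = ⟨ψ_j, ρ̄ ψ_j⟩ = ∑ pᵢ |⟨aᵢ ⊗ bᵢ, ψ_j⟩|², so every product vector of positive weight
is orthogonal to all ψ_j, i.e. ⟨aᵢ, α_j⟩⟨bᵢ, β_j⟩ = 0 for every j. Since tr ρ̄ = 1, some term
of the decomposition is nonzero, and its aᵢ, bᵢ contradict unextendibility.
-/

open Matrix
open scoped ComplexOrder

namespace Matrix

variable {I J K R : Type*}

def kroneckerVec [Mul R] (a : I → R) (b : J → R) : I × J → R := fun q => a q.1 * b q.2

theorem kroneckerVec_eq_zero_iff [MulZeroClass R] [NoZeroDivisors R] {a : I → R} {b : J → R} :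
    kroneckerVec a b = 0 ↔ a = 0 ∨ b = 0 := by
  simp only [funext_iff, kroneckerVec, Prod.forall, Pi.zero_apply, mul_eq_zero, forall_or_left,
    forall_or_right]

section CommRing

variable [Fintype I] [Fintype K] [CommRing R] [StarRing R]

theorem star_kroneckerVec_dotProduct [Fintype J] (a c : I → R) (b d : J → R) :
    star (kroneckerVec a b) ⬝ᵥ kroneckerVec c d = (star a ⬝ᵥ c) * (star b ⬝ᵥ d) := by
  simp only [dotProduct, kroneckerVec, Fintype.sum_prod_type, Finset.sum_mul_sum, Pi.star_apply,
    star_mul']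
  exact Finset.sum_congr rfl fun _ _ => Finset.sum_congr rfl fun _ _ => by ring

theorem star_dotProduct_sum_smul_vecMulVec_mulVec (p : K → R) (v : K → I → R) (u : I → R) :
    star u ⬝ᵥ ((∑ k, p k • vecMulVec (v k) (star (v k))) *ᵥ u)
      = ∑ k, p k * (star (star (v k) ⬝ᵥ u) * (star (v k) ⬝ᵥ u)) := by
  simp only [sum_mulVec, smul_mulVec, vecMulVec_mulVec, op_smul_eq_smul, dotProduct_sum,
    dotProduct_smul, smul_eq_mul, ← star_dotProduct]
  exact Finset.sum_congr rfl fun _ _ => by ring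

variable [DecidableEq I] [DecidableEq K]

theorem one_sub_sum_vecMulVec_mulVec_of_orthonormal (w : K → I → R)
    (hw : ∀ k l, star (w k) ⬝ᵥ w l = if k = l then 1 else 0) (j : K) :
    (1 - ∑ k, vecMulVec (w k) (star (w k))) *ᵥ w j = 0 := by
  simp [sub_mulVec, sum_mulVec, vecMulVec_mulVec, hw]

theorem trace_one_sub_sum_vecMulVec_of_orthonormal (w : K → I → R)
    (hw : ∀ k l, star (w k) ⬝ᵥ w l = if k = l then 1 else 0) :
    trace (1 - ∑ k, vecMulVec (w k) (star (w k))) = (Fintype.card I - Fintype.card K : R) := by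
  simp [trace_sub, trace_sum, dotProduct_comm _ (star _), hw]

end CommRing

theorem star_dotProduct_eq_zero_of_sum_smul_vecMulVec_mulVec_eq_zero [Fintype I] [Fintype K]
    {𝕜 : Type*} [RCLike 𝕜] {p : K → 𝕜} (hp : ∀ k, 0 ≤ p k) {v : K → I → 𝕜} {u : I → 𝕜}
    (hu : (∑ k, p k • vecMulVec (v k) (star (v k))) *ᵥ u = 0) {k : K} (hk : p k ≠ 0) :
    star (v k) ⬝ᵥ u = 0 := by
  have hterm_nonneg : ∀ l, 0 ≤ p l * (star (star (v l) ⬝ᵥ u) * (star (v l) ⬝ᵥ u)) :=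
    fun l => mul_nonneg (hp l) (star_mul_self_nonneg _)
  have hsum := star_dotProduct_sum_smul_vecMulVec_mulVec p v u
  rw [hu, dotProduct_zero, eq_comm, Finset.sum_eq_zero_iff_of_nonneg fun l _ => hterm_nonneg l]
    at hsum
  simpa [hk] using hsum k (Finset.mem_univ k)

end Matrix

/-- For a UPB S = {ψ_j = α_j ⊗ β_j} in ℂ^{dA} ⊗ ℂ^{dB}, the state ρ̄ proportional
to the projector onto span(S)^⊥ is entangled: it is not a convex combination of
projectors onto product states. -/
theorem stmt7 (dA dB n : ℕ)
    (α : Fin n → EuclideanSpace ℂ (Fin dA)) (β : Fin n → EuclideanSpace ℂ (Fin dB))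
    (ψ : Fin n → (Fin dA × Fin dB) → ℂ)
    (hψ : ∀ j p, ψ j p = α j p.1 * β j p.2)
    (horthonormal : ∀ j k, (∑ p : Fin dA × Fin dB, (starRingEnd ℂ) (ψ j p) * ψ k p)
        = if j = k then 1 else 0)
    (hupb : ¬ ∃ (a : EuclideanSpace ℂ (Fin dA)) (b : EuclideanSpace ℂ (Fin dB)),
        a ≠ 0 ∧ b ≠ 0 ∧ ∀ j, (inner ℂ a (α j) : ℂ) = 0 ∨ (inner ℂ b (β j) : ℂ) = 0)
    (hn : n < dA * dB)
    (ρ : Matrix (Fin dA × Fin dB) (Fin dA × Fin dB) ℂ)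
    (hρ : ρ = (((dA * dB - n : ℕ) : ℂ))⁻¹ •
        ((1 : Matrix (Fin dA × Fin dB) (Fin dA × Fin dB) ℂ)
          - ∑ j, Matrix.vecMulVec (ψ j) (star (ψ j)))) :
    ¬ ∃ (N : ℕ) (p : Fin N → ℝ) (a : Fin N → EuclideanSpace ℂ (Fin dA))
        (b : Fin N → EuclideanSpace ℂ (Fin dB)),
        (∀ i, 0 ≤ p i) ∧
        ρ = ∑ i, (p i : ℂ) • Matrix.vecMulVec (fun q : Fin dA × Fin dB => a i q.1 * b i q.2)
              (star (fun q : Fin dA × Fin dB => a i q.1 * b i q.2)) := by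
  rintro ⟨N, p, a, b, hp, hdec⟩
  change ρ = ∑ i, (p i : ℂ) • vecMulVec (kroneckerVec (a i) (b i))
    (star (kroneckerVec (a i) (b i))) at hdec
  have hψ_eq : ∀ j, ψ j = kroneckerVec (α j) (β j) := fun j => funext (hψ j)
  have hρ_ker : ∀ j, ρ *ᵥ ψ j = 0 := fun j => by
    rw [hρ, smul_mulVec, one_sub_sum_vecMulVec_mulVec_of_orthonormal ψ horthonormal, smul_zero]
  have hρ_ne : ρ ≠ 0 := by
    have hc : ((dA * dB - n : ℕ) : ℂ) ≠ 0 := Nat.cast_ne_zero.mpr (Nat.sub_pos_of_lt hn).ne'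
    have htrace : ρ.trace = 1 := by
      rw [hρ, trace_smul, trace_one_sub_sum_vecMulVec_of_orthonormal ψ horthonormal, smul_eq_mul]
      simpa [Nat.cast_sub hn.le] using inv_mul_cancel₀ hc
    rintro rfl
    simp at htrace
  obtain ⟨i, -, hi⟩ := Finset.exists_ne_zero_of_sum_ne_zero (hdec ▸ hρ_ne)
  obtain ⟨hpi, hvi⟩ := smul_ne_zero_iff.mp hi
  obtain ⟨ha, hb⟩ := not_or.mp (kroneckerVec_eq_zero_iff.not.mp (by simpa using hvi))
  refine hupb ⟨a i, b i, fun h => ha (by simp [h]), fun h => hb (by simp [h]), fun j => ?_⟩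
  have horth := star_dotProduct_eq_zero_of_sum_smul_vecMulVec_mulVec_eq_zero
    (fun k => Complex.zero_le_real.mpr (hp k)) (hdec ▸ hρ_ker j) hpi
  rw [hψ_eq, star_kroneckerVec_dotProduct, mul_eq_zero] at horth
  simpa [EuclideanSpace.inner_eq_star_dotProduct, dotProduct_comm] using horth
end

section
/- Any set of at most 3 mutually orthogonal product vectors in a multipartite Hilbert space ⊗_{i=1}^m H_i can be completed to a full orthogonal product basis of the whole space. -/
/-!
Fix an orthonormal basis `G i` of every factor. The product vectors `fun i => G i (t i)`, for `t`
in the grid `∀ i, κ i`, form an orthogonal product basis. On a box `∏ i, S i` of the grid, each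
`G i` may be replaced by another orthonormal basis that spans the same subspace as `G i '' S i`:
the box stays orthogonal to the rest of the grid, and two disjoint boxes stay orthogonal to each
other. So it is enough to give each prescribed vector its own box, re-based so that the vector is
one of its points, with the boxes pairwise disjoint.

Say `ψ₀ ⟂ ψ₁` at party `a`, `ψ₀ ⟂ ψ₂` at `b` and `ψ₁ ⟂ ψ₂` at `c`. If `a = b = c`, the boxes are
slices `{t a = x}`. If `a = b ≠ c`, the box of `ψ₀` is `{t a = x₀}`, and the boxes of `ψ₁` and `ψ₂`
lie in `{t a ≠ x₀}` and are separated at `c`. If `a`, `b` and `c` are distinct, the box of `ψ₀`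
fixes the coordinates at `a` and `b`, that of `ψ₁` those at `a` and `c`, and that of `ψ₂` those at
`b` and `c`.
-/

open Function Set Module
open scoped InnerProductSpace

variable {𝕜 : Type*} [RCLike 𝕜]

theorem pairwise_fin_three_of_symm {R : Fin 3 → Fin 3 → Prop} (hR : ∀ k l, R k l → R l k)
    (h01 : R 0 1) (h02 : R 0 2) (h12 : R 1 2) : Pairwise R := by
  intro k l hkl
  fin_cases k <;> fin_cases l <;> first | exact absurd rfl hkl | assumption | exact hR _ _ ‹_›

section OrthonormalBasis

variable {E : Type*} [NormedAddCommGroup E] [InnerProductSpace 𝕜 E]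

theorem orthonormal_pair {x y : E} (hx : ‖x‖ = 1) (hy : ‖y‖ = 1) (hxy : ⟪x, y⟫_𝕜 = 0) :
    Orthonormal 𝕜 ![x, y] := by
  simp [hx, hy, hxy]

variable [FiniteDimensional 𝕜 E] {κ α : Type*} [Fintype κ] {v : α → E}

theorem nonempty_orthonormalBasis_of_finrank_eq (hκ : finrank 𝕜 E = Fintype.card κ) :
    Nonempty (OrthonormalBasis κ 𝕜 E) :=
  ⟨(stdOrthonormalBasis 𝕜 E).reindex (Fintype.equivFinOfCardEq hκ.symm).symm⟩

theorem Orthonormal.exists_orthonormalBasis_comp_eq (hv : Orthonormal 𝕜 v) {e : α → κ}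
    (he : Injective e) (hκ : finrank 𝕜 E = Fintype.card κ) :
    ∃ B : OrthonormalBasis κ 𝕜 E, ∀ j, B (e j) = v j := by
  have hrestrict :
      (range e).domRestrict (extend e v 0) = v ∘ (Equiv.ofInjective e he).symm := by
    funext x
    simp only [domRestrict_apply, comp_apply]
    conv_lhs => rw [← Equiv.apply_ofInjective_symm he x]
    exact he.extend_apply v 0 _
  have hv' : Orthonormal 𝕜 ((range e).domRestrict (extend e v 0)) := by
    rw [hrestrict]
    exact hv.comp _ (Equiv.injective _)
  obtain ⟨B, hB⟩ := hv'.exists_orthonormalBasis_extension_of_card_eq hκ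
  exact ⟨B, fun j => (hB _ (mem_range_self j)).trans (he.extend_apply v 0 j)⟩

theorem Orthonormal.exists_orthonormalBasis_embedding [Finite α] (hv : Orthonormal 𝕜 v)
    (hκ : finrank 𝕜 E = Fintype.card κ) :
    ∃ (B : OrthonormalBasis κ 𝕜 E) (e : α ↪ κ), ∀ j, B (e j) = v j := by
  have := Fintype.ofFinite α
  obtain ⟨e⟩ : Nonempty (α ↪ κ) :=
    Embedding.nonempty_of_card_le (hκ ▸ hv.linearIndependent.fintype_card_le_finrank)
  obtain ⟨B, hB⟩ := hv.exists_orthonormalBasis_comp_eq e.injective hκ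
  exact ⟨B, e, hB⟩

theorem exists_orthonormalBasis_apply_eq {u : E} (hu : ‖u‖ = 1)
    (hκ : finrank 𝕜 E = Fintype.card κ) : ∃ (B : OrthonormalBasis κ 𝕜 E) (x : κ), B x = u := by
  obtain ⟨B, e, hB⟩ := (orthonormal_subsingleton_iff.2 fun _ => hu :
    Orthonormal 𝕜 fun _ : Unit => u).exists_orthonormalBasis_embedding hκ
  exact ⟨B, e (), hB ()⟩

end OrthonormalBasis

section ProductFamily

variable {ι : Type*} {E : ι → Type*} [∀ i, NormedAddCommGroup (E i)]
  [∀ i, InnerProductSpace 𝕜 (E i)]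

variable (𝕜) in
def IsOrthogonalProductFamily {α : Type*} (f : α → ∀ i, E i) : Prop :=
  (∀ t i, ‖f t i‖ = 1) ∧ Pairwise fun t s => ∃ i, ⟪f t i, f s i⟫_𝕜 = 0

theorem IsOrthogonalProductFamily.injective {α : Type*} {f : α → ∀ i, E i}
    (hf : IsOrthogonalProductFamily 𝕜 f) : Injective f := by
  intro t s hts
  by_contra hne
  obtain ⟨i, hi⟩ := hf.2 hne
  rw [hts, inner_self_eq_zero] at hi
  simpa [hi] using hf.1 s i

variable (𝕜) in
/-- Indexing the family by the grid `∀ i, κ i` fixes its size to `∏ i, card (κ i)`: with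
`card (κ i) = finrank (E i)` it is a complete orthogonal product basis. -/
def ProductCompletable (κ : ι → Type*) (A : Set (∀ i, E i)) : Prop :=
  ∃ f : (∀ i, κ i) → ∀ i, E i, IsOrthogonalProductFamily 𝕜 f ∧ A ⊆ range f

theorem ProductCompletable.mono {κ : ι → Type*} {A B : Set (∀ i, E i)}
    (hB : ProductCompletable 𝕜 κ B) (hAB : A ⊆ B) : ProductCompletable 𝕜 κ A :=
  let ⟨f, hf, hBf⟩ := hB
  ⟨f, hf, hAB.trans hBf⟩

end ProductFamily

section LocalPatch

variable {E : Type*} [NormedAddCommGroup E] [InnerProductSpace 𝕜 E] {κ : Type*} [Fintype κ]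

/-- A replacement of the orthonormal basis `G` by `basis` on the index set `set`;
`inner_basis_eq_zero` says that `basis '' set` spans the same subspace as `G '' set`. -/
structure LocalPatch (G : OrthonormalBasis κ 𝕜 E) where
  set : Set κ
  basis : OrthonormalBasis κ 𝕜 E
  index : κ
  index_mem : index ∈ set
  inner_basis_eq_zero : ∀ y ∉ set, ∀ z ∈ set, ⟪G y, basis z⟫_𝕜 = 0

namespace LocalPatch

variable {G : OrthonormalBasis κ 𝕜 E}

noncomputable def vec (p : LocalPatch G) : E := p.basis p.index

def univ (G B : OrthonormalBasis κ 𝕜 E) (x : κ) : LocalPatch G :=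
  ⟨Set.univ, B, x, trivial, fun _ hy => (hy trivial).elim⟩

def singleton (G : OrthonormalBasis κ 𝕜 E) (x : κ) : LocalPatch G :=
  ⟨{x}, G, x, rfl, fun _ hy _ hz => G.orthonormal.2 fun h => hy (h ▸ hz)⟩

@[simp] theorem singleton_set (x : κ) : (singleton G x).set = {x} := rfl

@[simp] theorem singleton_vec (x : κ) : (singleton G x).vec = G x := rfl

theorem inner_basis_eq_zero_of_disjoint {p q : LocalPatch G} (h : Disjoint p.set q.set)
    {z w : κ} (hz : z ∈ p.set) (hw : w ∈ q.set) : ⟪p.basis z, q.basis w⟫_𝕜 = 0 := by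
  rw [← G.sum_inner_mul_inner]
  refine Finset.sum_eq_zero fun y _ => ?_
  by_cases hy : y ∈ p.set
  · rw [q.inner_basis_eq_zero y (h.notMem_of_mem_left hy) w hw, mul_zero]
  · rw [← inner_conj_symm, p.inner_basis_eq_zero y hy z hz, map_zero, zero_mul]

end LocalPatch

end LocalPatch

section Patches

variable {ι : Type*} {E : ι → Type*} [∀ i, NormedAddCommGroup (E i)]
  [∀ i, InnerProductSpace 𝕜 (E i)] {κ : ι → Type*} [∀ i, Fintype (κ i)] {K : Type*}
  (G : ∀ i, OrthonormalBasis (κ i) 𝕜 (E i)) (P : K → ∀ i, LocalPatch (G i))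

def patchBox (k : K) : Set (∀ i, κ i) := Set.univ.pi fun i => (P k i).set

open Classical in
noncomputable def patchedFamily (t : ∀ i, κ i) : ∀ i, E i :=
  if h : ∃ k, t ∈ patchBox G P k then fun i => (P h.choose i).basis (t i)
  else fun i => G i (t i)

variable {G P}

theorem patchedFamily_of_mem (hP : Pairwise fun k l => ∃ i, Disjoint (P k i).set (P l i).set)
    {t : ∀ i, κ i} {k : K} (ht : t ∈ patchBox G P k) :
    patchedFamily G P t = fun i => (P k i).basis (t i) := by
  have hex : ∃ k, t ∈ patchBox G P k := ⟨k, ht⟩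
  have hk : hex.choose = k := by
    by_contra hne
    obtain ⟨i, hi⟩ := hP hne
    exact hi.notMem_of_mem_left (hex.choose_spec i trivial) (ht i trivial)
  rw [patchedFamily, dif_pos hex, hk]

theorem patchedFamily_of_forall_notMem {t : ∀ i, κ i} (ht : ∀ k, t ∉ patchBox G P k) :
    patchedFamily G P t = fun i => G i (t i) := by
  rw [patchedFamily, dif_neg (not_exists.2 ht)]

theorem exists_notMem_of_notMem_patchBox {t : ∀ i, κ i} {k : K} (ht : t ∉ patchBox G P k) :
    ∃ i, t i ∉ (P k i).set := by
  simpa [patchBox] using ht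

theorem isOrthogonalProductFamily_patchedFamily
    (hP : Pairwise fun k l => ∃ i, Disjoint (P k i).set (P l i).set) :
    IsOrthogonalProductFamily 𝕜 (patchedFamily G P) := by
  refine ⟨fun t i => ?_, fun t s hts => ?_⟩
  · unfold patchedFamily
    split_ifs <;> simp
  obtain ⟨i₀, hi₀⟩ := ne_iff.mp hts
  by_cases ht : ∃ k, t ∈ patchBox G P k <;> by_cases hs : ∃ l, s ∈ patchBox G P l
  · obtain ⟨k, htk⟩ := ht
    obtain ⟨l, hsl⟩ := hs
    rw [patchedFamily_of_mem hP htk, patchedFamily_of_mem hP hsl]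
    obtain rfl | hkl := eq_or_ne k l
    · exact ⟨i₀, (P k i₀).basis.orthonormal.2 hi₀⟩
    obtain ⟨i, hi⟩ := hP hkl
    exact ⟨i, LocalPatch.inner_basis_eq_zero_of_disjoint hi (htk i trivial) (hsl i trivial)⟩
  · obtain ⟨k, htk⟩ := ht
    obtain ⟨i, hi⟩ := exists_notMem_of_notMem_patchBox (not_exists.1 hs k)
    rw [patchedFamily_of_mem hP htk, patchedFamily_of_forall_notMem (not_exists.1 hs)]
    exact ⟨i, inner_eq_zero_symm.1 ((P k i).inner_basis_eq_zero _ hi _ (htk i trivial))⟩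
  · obtain ⟨l, hsl⟩ := hs
    obtain ⟨i, hi⟩ := exists_notMem_of_notMem_patchBox (not_exists.1 ht l)
    rw [patchedFamily_of_mem hP hsl, patchedFamily_of_forall_notMem (not_exists.1 ht)]
    exact ⟨i, (P l i).inner_basis_eq_zero _ hi _ (hsl i trivial)⟩
  · rw [patchedFamily_of_forall_notMem (not_exists.1 ht),
      patchedFamily_of_forall_notMem (not_exists.1 hs)]
    exact ⟨i₀, (G i₀).orthonormal.2 hi₀⟩

theorem productCompletable_of_patches
    (hP : Pairwise fun k l => ∃ i, Disjoint (P k i).set (P l i).set) {ψ : K → ∀ i, E i}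
    (hψ : ∀ k i, (P k i).vec = ψ k i) : ProductCompletable 𝕜 κ (range ψ) := by
  refine ⟨patchedFamily G P, isOrthogonalProductFamily_patchedFamily hP, ?_⟩
  rintro _ ⟨k, rfl⟩
  refine ⟨fun i => (P k i).index, ?_⟩
  rw [patchedFamily_of_mem hP fun i _ => (P k i).index_mem]
  exact funext (hψ k)

theorem LocalPatch.vec_update [DecidableEq ι] {P : ∀ i, LocalPatch (G i)} {u : ∀ i, E i}
    (hP : ∀ i, (P i).vec = u i) {a : ι} {q : LocalPatch (G a)} (hq : q.vec = u a) :
    ∀ i, (update P a q i).vec = u i :=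
  (forall_update_iff P fun i p => p.vec = u i).2 ⟨hq, fun i _ => hP i⟩

end Patches

section Completion

variable {ι : Type*} {E : ι → Type*} [∀ i, NormedAddCommGroup (E i)]
  [∀ i, InnerProductSpace 𝕜 (E i)] [∀ i, FiniteDimensional 𝕜 (E i)]
  {κ : ι → Type*} [∀ i, Fintype (κ i)]

theorem exists_patches_vec_eq (hκ : ∀ i, finrank 𝕜 (E i) = Fintype.card (κ i))
    {u : ∀ i, E i} (hu : ∀ i, ‖u i‖ = 1) (G : ∀ i, OrthonormalBasis (κ i) 𝕜 (E i)) :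
    ∃ P : ∀ i, LocalPatch (G i), ∀ i, (P i).vec = u i := by
  choose B x hB using fun i => exists_orthonormalBasis_apply_eq (hu i) (hκ i)
  exact ⟨fun i => .univ (G i) (B i) (x i), hB⟩

variable [DecidableEq ι]

theorem productCompletable_range_of_orthonormal
    (hκ : ∀ i, finrank 𝕜 (E i) = Fintype.card (κ i)) {α : Type*} [Finite α]
    {ψ : α → ∀ i, E i} (hψ : ∀ j i, ‖ψ j i‖ = 1) (a : ι) (ha : Orthonormal 𝕜 fun j => ψ j a) :
    ProductCompletable 𝕜 κ (range ψ) := by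
  obtain ⟨g, e, hg⟩ := ha.exists_orthonormalBasis_embedding (hκ a)
  let G := update (fun i => (nonempty_orthonormalBasis_of_finrank_eq (hκ i)).some) a g
  choose P hP using fun j => exists_patches_vec_eq hκ (hψ j) G
  refine productCompletable_of_patches (P := fun j => update (P j) a (.singleton (G a) (e j)))
    (fun j l hjl => ⟨a, by simpa using e.injective.ne hjl⟩) fun j => ?_
  exact LocalPatch.vec_update (hP j) (by simp [G, hg])

variable {u v w : ∀ i, E i}

theorem productCompletable_of_two (hκ : ∀ i, finrank 𝕜 (E i) = Fintype.card (κ i))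
    (hu : ∀ i, ‖u i‖ = 1) (hv : ∀ i, ‖v i‖ = 1) (huv : ∃ i, ⟪u i, v i⟫_𝕜 = 0) :
    ProductCompletable 𝕜 κ {u, v} := by
  obtain ⟨a, ha⟩ := huv
  have := productCompletable_range_of_orthonormal hκ (ψ := ![u, v])
    (by simp [Fin.forall_fin_two, hu, hv]) a (by
      convert orthonormal_pair (hu a) (hv a) ha using 1
      funext j
      fin_cases j <;> rfl)
  rwa [Matrix.range_cons_cons_empty] at this

theorem productCompletable_of_hub (hκ : ∀ i, finrank 𝕜 (E i) = Fintype.card (κ i))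
    (hu : ∀ i, ‖u i‖ = 1) (hv : ∀ i, ‖v i‖ = 1) (hw : ∀ i, ‖w i‖ = 1) {a c : ι} (hac : a ≠ c)
    (huv : ⟪u a, v a⟫_𝕜 = 0) (huw : ⟪u a, w a⟫_𝕜 = 0) (hvw : ⟪v c, w c⟫_𝕜 = 0) :
    ProductCompletable 𝕜 κ {u, v, w} := by
  obtain ⟨g, e, hg⟩ :=
    (orthonormal_pair (hu a) (hv a) huv).exists_orthonormalBasis_embedding (hκ a)
  obtain ⟨p, hp⟩ :=
    (orthonormal_pair (hu a) (hw a) huw).exists_orthonormalBasis_comp_eq e.injective (hκ a)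
  obtain ⟨r, e', hr⟩ :=
    (orthonormal_pair (hv c) (hw c) hvw).exists_orthonormalBasis_embedding (hκ c)
  let G := update (update (fun i => (nonempty_orthonormalBasis_of_finrank_eq (hκ i)).some)
    a g) c r
  have hGa : G a = g := by simp [G, hac]
  have hGc : G c = r := by simp [G]
  obtain ⟨Pu, hPu⟩ := exists_patches_vec_eq hκ hu G
  obtain ⟨Pv, hPv⟩ := exists_patches_vec_eq hκ hv G
  obtain ⟨Pw, hPw⟩ := exists_patches_vec_eq hκ hw G
  have he : e 1 ≠ e 0 := e.injective.ne (by decide)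
  -- `g` and `p` share the vector `u a` at `e 0`, so off `e 0` both span `(u a)ᗮ`.
  let qw : LocalPatch (G a) := ⟨{e 0}ᶜ, p, e 1, he, fun y hy z hz => by
    rw [Set.notMem_compl_iff, Set.mem_singleton_iff] at hy
    rw [hy, hGa, (hg 0).trans (hp 0).symm]
    exact p.orthonormal.2 (Ne.symm hz)⟩
  let P : Fin 3 → ∀ i, LocalPatch (G i) :=
    ![update Pu a (.singleton _ (e 0)),
      update (update Pv a (.singleton _ (e 1))) c (.singleton _ (e' 0)),
      update (update Pw a qw) c (.singleton _ (e' 1))]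
  have hdisj : Pairwise fun k l => ∃ i, Disjoint (P k i).set (P l i).set :=
    pairwise_fin_three_of_symm (fun _ _ ⟨i, h⟩ => ⟨i, h.symm⟩) ⟨a, by simp [P, hac]⟩
      ⟨a, by simp [P, hac, qw]⟩ ⟨c, by simp [P]⟩
  have := productCompletable_of_patches hdisj (ψ := ![u, v, w]) fun k => ?_
  · rwa [Matrix.range_cons, Matrix.range_cons_cons_empty, Set.singleton_union] at this
  fin_cases k
  · exact LocalPatch.vec_update hPu (by simp [hGa, hg])
  · exact LocalPatch.vec_update (LocalPatch.vec_update hPv (by simp [hGa, hg]))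
      (by simp [hGc, hr])
  · exact LocalPatch.vec_update (LocalPatch.vec_update hPw (by simp [qw, LocalPatch.vec, hp]))
      (by simp [hGc, hr])

theorem productCompletable_of_cycle (hκ : ∀ i, finrank 𝕜 (E i) = Fintype.card (κ i))
    (hu : ∀ i, ‖u i‖ = 1) (hv : ∀ i, ‖v i‖ = 1) (hw : ∀ i, ‖w i‖ = 1) {a b c : ι} (hab : a ≠ b)
    (hac : a ≠ c) (hbc : b ≠ c) (huv : ⟪u a, v a⟫_𝕜 = 0) (huw : ⟪u b, w b⟫_𝕜 = 0)
    (hvw : ⟪v c, w c⟫_𝕜 = 0) :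
    ProductCompletable 𝕜 κ {u, v, w} := by
  obtain ⟨g, e, hg⟩ :=
    (orthonormal_pair (hu a) (hv a) huv).exists_orthonormalBasis_embedding (hκ a)
  obtain ⟨q, f, hq⟩ :=
    (orthonormal_pair (hu b) (hw b) huw).exists_orthonormalBasis_embedding (hκ b)
  obtain ⟨r, e', hr⟩ :=
    (orthonormal_pair (hv c) (hw c) hvw).exists_orthonormalBasis_embedding (hκ c)
  let G := update (update (update
    (fun i => (nonempty_orthonormalBasis_of_finrank_eq (hκ i)).some) a g) b q) c r
  have hGa : G a = g := by simp [G, hab, hac]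
  have hGb : G b = q := by simp [G, hbc]
  have hGc : G c = r := by simp [G]
  obtain ⟨Pu, hPu⟩ := exists_patches_vec_eq hκ hu G
  obtain ⟨Pv, hPv⟩ := exists_patches_vec_eq hκ hv G
  obtain ⟨Pw, hPw⟩ := exists_patches_vec_eq hκ hw G
  let P : Fin 3 → ∀ i, LocalPatch (G i) :=
    ![update (update Pu a (.singleton _ (e 0))) b (.singleton _ (f 0)),
      update (update Pv a (.singleton _ (e 1))) c (.singleton _ (e' 0)),
      update (update Pw b (.singleton _ (f 1))) c (.singleton _ (e' 1))]
  have hdisj : Pairwise fun k l => ∃ i, Disjoint (P k i).set (P l i).set :=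
    pairwise_fin_three_of_symm (fun _ _ ⟨i, h⟩ => ⟨i, h.symm⟩) ⟨a, by simp [P, hab, hac]⟩
      ⟨b, by simp [P, hbc]⟩ ⟨c, by simp [P]⟩
  have := productCompletable_of_patches hdisj (ψ := ![u, v, w]) fun k => ?_
  · rwa [Matrix.range_cons, Matrix.range_cons_cons_empty, Set.singleton_union] at this
  fin_cases k
  · exact LocalPatch.vec_update (LocalPatch.vec_update hPu (by simp [hGa, hg]))
      (by simp [hGb, hq])
  · exact LocalPatch.vec_update (LocalPatch.vec_update hPv (by simp [hGa, hg]))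
      (by simp [hGc, hr])
  · exact LocalPatch.vec_update (LocalPatch.vec_update hPw (by simp [hGb, hq]))
      (by simp [hGc, hr])

theorem productCompletable_of_three (hκ : ∀ i, finrank 𝕜 (E i) = Fintype.card (κ i))
    (hu : ∀ i, ‖u i‖ = 1) (hv : ∀ i, ‖v i‖ = 1) (hw : ∀ i, ‖w i‖ = 1)
    (huv : ∃ i, ⟪u i, v i⟫_𝕜 = 0) (huw : ∃ i, ⟪u i, w i⟫_𝕜 = 0) (hvw : ∃ i, ⟪v i, w i⟫_𝕜 = 0) :
    ProductCompletable 𝕜 κ {u, v, w} := by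
  obtain ⟨a, ha⟩ := huv
  obtain ⟨b, hb⟩ := huw
  obtain ⟨c, hc⟩ := hvw
  by_cases hab : a = b
  · subst hab
    by_cases hac : a = c
    · subst hac
      have := productCompletable_range_of_orthonormal hκ (ψ := ![u, v, w])
        (by simp [Fin.forall_fin_succ, hu, hv, hw]) a (by
          convert (by simp [hu, hv, hw, ha, hb, hc] : Orthonormal 𝕜 ![u a, v a, w a]) using 1
          funext j
          fin_cases j <;> rfl)
      rwa [Matrix.range_cons, Matrix.range_cons_cons_empty, Set.singleton_union] at this
    · exact productCompletable_of_hub hκ hu hv hw hac ha hb hc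
  by_cases hac : a = c
  · subst hac
    rw [Set.insert_comm]
    exact productCompletable_of_hub hκ hv hu hw hab (inner_eq_zero_symm.1 ha) hc hb
  by_cases hbc : b = c
  · subst hbc
    rw [Set.pair_comm v w, Set.insert_comm]
    exact productCompletable_of_hub hκ hw hu hv (Ne.symm hab) (inner_eq_zero_symm.1 hb)
      (inner_eq_zero_symm.1 hc) ha
  exact productCompletable_of_cycle hκ hu hv hw hab hac hbc ha hb hc

theorem productCompletable_range_of_le_three (hκ : ∀ i, finrank 𝕜 (E i) = Fintype.card (κ i))
    {n : ℕ} (hn : n ≤ 3) {ψ : Fin n → ∀ i, E i} (hψ : IsOrthogonalProductFamily 𝕜 ψ) :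
    ProductCompletable 𝕜 κ (range ψ) := by
  obtain ⟨hunit, horth⟩ := hψ
  let G i := (nonempty_orthonormalBasis_of_finrank_eq (κ := κ i) (hκ i)).some
  interval_cases n
  · exact productCompletable_of_patches (G := G) (P := finZeroElim) (fun k => k.elim0)
      (fun k => k.elim0)
  · obtain ⟨P, hP⟩ := exists_patches_vec_eq hκ (hunit 0) G
    exact productCompletable_of_patches (P := fun _ => P) Subsingleton.pairwise
      (by simpa [Fin.forall_fin_one] using hP)
  · refine (productCompletable_of_two hκ (hunit 0) (hunit 1) (horth (by decide))).mono ?_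
    rintro _ ⟨j, rfl⟩
    fin_cases j <;> simp
  · refine (productCompletable_of_three hκ (hunit 0) (hunit 1) (hunit 2) (horth (by decide))
      (horth (by decide)) (horth (by decide))).mono ?_
    rintro _ ⟨j, rfl⟩
    fin_cases j <;> simp

end Completion

/-- Any set of at most 3 mutually orthogonal product vectors (with unit factors)
in a multipartite space ⊗_{i} ℂ^{d_i} can be completed to a full orthogonal
product basis of the whole space: there is a family of D = ∏_i d_i unit product
vectors, pairwise orthogonal (some factor inner product vanishes), which
contains the given set. -/
theorem stmt8 (m n : ℕ) (d : Fin m → ℕ) (hn : n ≤ 3)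
    (φ : (i : Fin m) → Fin n → EuclideanSpace ℂ (Fin (d i)))
    (hunit : ∀ i j, ‖φ i j‖ = 1)
    (horth : ∀ j k : Fin n, j ≠ k → ∃ i, (inner ℂ (φ i j) (φ i k) : ℂ) = 0) :
    ∃ (ext : (i : Fin m) → Fin (∏ i, d i) → EuclideanSpace ℂ (Fin (d i)))
      (e : Fin n ↪ Fin (∏ i, d i)),
      (∀ i t, ‖ext i t‖ = 1) ∧
      (∀ s t : Fin (∏ i, d i), s ≠ t → ∃ i, (inner ℂ (ext i s) (ext i t) : ℂ) = 0) ∧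
      (∀ j i, ext i (e j) = φ i j) := by
  have hψ : IsOrthogonalProductFamily ℂ fun j i => φ i j := ⟨fun j i => hunit i j, horth⟩
  obtain ⟨f, hf, hsub⟩ :=
    productCompletable_range_of_le_three (κ := fun i => Fin (d i)) (by simp) hn hψ
  obtain ⟨τ, hτ⟩ := range_subset_range_iff_exists_comp.1 hsub
  have hτinj : Injective τ := Injective.of_comp (hτ ▸ hψ.injective)
  let σ : (∀ i, Fin (d i)) ≃ Fin (∏ i, d i) := Fintype.equivFinOfCardEq (by simp)
  refine ⟨fun i t => f (σ.symm t) i, (Embedding.mk τ hτinj).trans σ.toEmbedding,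
    fun i t => hf.1 _ i, fun s t hst => hf.2 (σ.symm.injective.ne hst), fun j i => ?_⟩
  simp [congrFun (congrFun hτ j) i]
end

section
/- Any set of mutually orthogonal product vectors {α_i ⊗ β_i} in ℂ² ⊗ ℂⁿ (n ≥ 2) is completable to a full orthogonal product basis of ℂ² ⊗ ℂⁿ; in particular there is no UPB in ℂ² ⊗ ℂⁿ. -/
/-!
In a two-dimensional space the vectors orthogonal to a nonzero `p` form a line. Fix
`q = α j₀ ≠ 0` and `p ⟂ q`, and split the indices into `A_p` (`α j ⟂ p`), `A_q` (`α j ⟂ q`)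
and the rest `R`. For `j ∈ R` and `l ∈ A_p ∪ A_q` the vectors `α j`, `α l` are not orthogonal, so
`β j ⟂ β l`: the `β`s of `R` lie in `Uᗮ`, where `U` is spanned by the `β`s of `A_p ∪ A_q`.
If `#A_p < dim U`, a nonzero `y ∈ U` orthogonal to the `β`s of `A_p` makes `q ⊗ y` orthogonal
to every member, and symmetrically for `A_q`. Otherwise `#R ≤ #s - 2 dim U`, and we recurse on
`R` inside `Uᗮ`, where the inequality `#R < 2 dim` persists. Adding one such vector at a time
completes the set, and it cannot exceed `2n` members since orthogonal product vectors are
linearly independent in `ℂ² ⊗ ℂⁿ`.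
-/

open Module Submodule Finset
open scoped InnerProductSpace TensorProduct

variable {𝕜 E F ι : Type*} [RCLike 𝕜]
  [NormedAddCommGroup E] [InnerProductSpace 𝕜 E] [NormedAddCommGroup F] [InnerProductSpace 𝕜 F]

variable (𝕜) in
/-- Orthogonality of `x ⊗ y` and `x' ⊗ y'`, since `⟪x ⊗ y, x' ⊗ y'⟫ = ⟪x, x'⟫ * ⟪y, y'⟫`. -/
def ProductOrthogonal (x : E) (y : F) (x' : E) (y' : F) : Prop :=
  ⟪x, x'⟫_𝕜 = 0 ∨ ⟪y, y'⟫_𝕜 = 0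

theorem ProductOrthogonal.symm {x x' : E} {y y' : F} (h : ProductOrthogonal 𝕜 x y x' y') :
    ProductOrthogonal 𝕜 x' y' x y :=
  h.imp inner_eq_zero_symm.mp inner_eq_zero_symm.mp

theorem ProductOrthogonal.smul {x x' : E} {y y' : F} (h : ProductOrthogonal 𝕜 x y x' y')
    (a b : 𝕜) : ProductOrthogonal 𝕜 (a • x) (b • y) x' y' :=
  h.imp (fun h => by rw [inner_smul_left, h, mul_zero])
    (fun h => by rw [inner_smul_left, h, mul_zero])

theorem inner_ne_zero_of_mem_span_singleton {u v : E} (hu : u ∈ 𝕜 ∙ v) (hu0 : u ≠ 0) :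
    ⟪v, u⟫_𝕜 ≠ 0 := by
  obtain ⟨c, rfl⟩ := mem_span_singleton.mp hu
  have hc : c ≠ 0 := by rintro rfl; simp at hu0
  have hv : v ≠ 0 := by rintro rfl; simp at hu0
  rw [inner_smul_right]
  exact mul_ne_zero hc (inner_self_ne_zero.mpr hv)

theorem exists_mem_ne_zero_forall_inner_eq_zero [FiniteDimensional 𝕜 F] {U : Submodule 𝕜 F}
    (β : ι → F) (t : Finset ι) (ht : #t < finrank 𝕜 U) :
    ∃ y ∈ U, y ≠ 0 ∧ ∀ j ∈ t, ⟪y, β j⟫_𝕜 = 0 := by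
  let f : U →ₗ[𝕜] t → 𝕜 := LinearMap.pi fun j => innerₛₗ 𝕜 (β j) ∘ₗ U.subtype
  obtain ⟨y, hy, hy0⟩ := exists_mem_ne_zero_of_ne_bot <|
    LinearMap.ker_ne_bot_of_finrank_lt (f := f) (by simpa using ht)
  refine ⟨y, y.2, by simpa using hy0, fun j hj => inner_eq_zero_symm.mp ?_⟩
  simpa [f] using congrFun (LinearMap.mem_ker.mp hy) ⟨j, hj⟩

theorem card_le_finrank_mul_finrank [Fintype ι] [FiniteDimensional 𝕜 E] [FiniteDimensional 𝕜 F]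
    {α : ι → E} {β : ι → F} (hα : ∀ j, α j ≠ 0) (hβ : ∀ j, β j ≠ 0)
    (h : Pairwise fun j l => ProductOrthogonal 𝕜 (α j) (β j) (α l) (β l)) :
    Fintype.card ι ≤ finrank 𝕜 E * finrank 𝕜 F := by
  have hli : LinearIndependent 𝕜 fun j => α j ⊗ₜ[𝕜] β j := by
    refine linearIndependent_of_ne_zero_of_inner_eq_zero (fun j => ?_) fun j l hjl => ?_
    · rw [← inner_self_ne_zero (𝕜 := 𝕜), TensorProduct.inner_tmul]
      exact mul_ne_zero (inner_self_ne_zero.mpr (hα j)) (inner_self_ne_zero.mpr (hβ j))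
    · rcases h hjl with h | h <;> simp [h]
  simpa using hli.fintype_card_le_finrank

section TwoDimensional

variable [Fact (finrank 𝕜 E = 2)]

theorem exists_ne_zero_inner_eq_zero (q : E) : ∃ p : E, p ≠ 0 ∧ ⟪p, q⟫_𝕜 = 0 := by
  have : FiniteDimensional 𝕜 E := .of_fact_finrank_eq_succ 1
  have hsum := (𝕜 ∙ q).finrank_add_finrank_orthogonal
  have hq : finrank 𝕜 (𝕜 ∙ q) ≤ 1 := by simpa using finrank_span_le_card ({q} : Set E)
  rw [Fact.out (p := finrank 𝕜 E = 2)] at hsum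
  have : (𝕜 ∙ q)ᗮ ≠ ⊥ := one_le_finrank_iff.mp (by omega)
  obtain ⟨p, hp, hp0⟩ := exists_mem_ne_zero_of_ne_bot this
  exact ⟨p, hp0, mem_orthogonal_singleton_iff_inner_left.mp hp⟩

theorem inner_ne_zero_of_inner_eq_zero {p u v : E} (hp : p ≠ 0) (hu : u ≠ 0) (hv : v ≠ 0)
    (hpu : ⟪p, u⟫_𝕜 = 0) (hpv : ⟪p, v⟫_𝕜 = 0) : ⟪u, v⟫_𝕜 ≠ 0 :=
  inner_ne_zero_of_mem_span_singleton
    (mem_span_singleton_of_inner_eq_zero_of_inner_eq_zero hp hu hpv hpu) hv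

theorem ProductOrthogonal.inner_right_eq_zero_of_inner_ne_zero {u u' p q : E} {v v' : F}
    (h : ProductOrthogonal 𝕜 u v u' v') (hp : p ≠ 0) (hu : u ≠ 0) (hpu : ⟪p, u⟫_𝕜 = 0)
    (hqp : ⟪q, p⟫_𝕜 = 0) (hqu' : ⟪q, u'⟫_𝕜 ≠ 0) : ⟪v, v'⟫_𝕜 = 0 := by
  refine h.resolve_left fun huu' => hqu' ?_
  have hu' : u' ∈ 𝕜 ∙ p := mem_span_singleton_of_inner_eq_zero_of_inner_eq_zero hu hp huu'
    (inner_eq_zero_symm.mp hpu)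
  exact inner_left_of_mem_orthogonal hu' (mem_orthogonal_singleton_iff_inner_left.mpr hqp)

theorem isOrtho_span_image_filter_union [DecidableEq ι] {α : ι → E} {β : ι → F}
    (hα : ∀ j, α j ≠ 0) {s : Finset ι}
    (hs : (s : Set ι).Pairwise fun j l => ProductOrthogonal 𝕜 (α j) (β j) (α l) (β l))
    {p q : E} (hp : p ≠ 0) (hq : q ≠ 0) (hpq : ⟪p, q⟫_𝕜 = 0) :
    span 𝕜 (β '' ↑({j ∈ s | ⟪p, α j⟫_𝕜 = 0} ∪ {j ∈ s | ⟪q, α j⟫_𝕜 = 0})) ⟂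
      span 𝕜 (β '' ↑(s \ ({j ∈ s | ⟪p, α j⟫_𝕜 = 0} ∪ {j ∈ s | ⟪q, α j⟫_𝕜 = 0}))) := by
  refine isOrtho_span.mpr ?_
  rintro - ⟨l, hl, rfl⟩ - ⟨j, hj, rfl⟩
  have hlj : l ≠ j := by rintro rfl; exact (mem_sdiff.mp hj).2 hl
  simp only [mem_coe, mem_sdiff, mem_union, mem_filter, not_or, not_and] at hl hj
  obtain ⟨hjs, hpj, hqj⟩ := hj
  rcases hl with ⟨hls, hpl⟩ | ⟨hls, hql⟩
  · exact (hs hls hjs hlj).inner_right_eq_zero_of_inner_ne_zero hp (hα l) hpl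
      (inner_eq_zero_symm.mp hpq) (hqj hjs)
  · exact (hs hls hjs hlj).inner_right_eq_zero_of_inner_ne_zero hq (hα l) hql hpq (hpj hjs)

end TwoDimensional

theorem exists_productOrthogonal_of_card_lt_finrank [FiniteDimensional 𝕜 F] {α : ι → E}
    {β : ι → F} {U : Submodule 𝕜 F} {x : E} {s t : Finset ι} (ht : #t < finrank 𝕜 U)
    (hcover : ∀ j ∈ s, j ∉ t → ⟪x, α j⟫_𝕜 = 0 ∨ β j ∈ Uᗮ) :
    ∃ y ∈ U, y ≠ 0 ∧ ∀ j ∈ s, ProductOrthogonal 𝕜 x y (α j) (β j) := by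
  obtain ⟨y, hyU, hy0, hy⟩ := exists_mem_ne_zero_forall_inner_eq_zero β t ht
  refine ⟨y, hyU, hy0, fun j hj => ?_⟩
  by_cases hjt : j ∈ t
  · exact Or.inr (hy j hjt)
  · exact (hcover j hj hjt).imp_right (inner_right_of_mem_orthogonal hyU)

theorem exists_productOrthogonal_mem_of_card_lt [Fact (finrank 𝕜 E = 2)]
    [FiniteDimensional 𝕜 F] {α : ι → E} {β : ι → F} (hα : ∀ j, α j ≠ 0) (s : Finset ι)
    (V : Submodule 𝕜 F) (hsV : ∀ j ∈ s, β j ∈ V)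
    (hs : (s : Set ι).Pairwise fun j l => ProductOrthogonal 𝕜 (α j) (β j) (α l) (β l))
    (hcard : #s < 2 * finrank 𝕜 V) :
    ∃ x ≠ 0, ∃ y ∈ V, y ≠ 0 ∧ ∀ j ∈ s, ProductOrthogonal 𝕜 x y (α j) (β j) := by
  classical
  induction s using Finset.strongInduction generalizing V with | H s ih => ?_
  obtain rfl | ⟨j₀, hj₀⟩ := s.eq_empty_or_nonempty
  · have : Nontrivial E := nontrivial_of_finrank_eq_succ (Fact.out (p := finrank 𝕜 E = 2))
    obtain ⟨x, hx⟩ := exists_ne (0 : E)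
    rw [card_empty] at hcard
    obtain ⟨y, hy, hy0⟩ := exists_mem_ne_zero_of_ne_bot (p := V) (one_le_finrank_iff.mp (by omega))
    exact ⟨x, hx, y, hy, hy0, by simp⟩
  set q := α j₀
  have hq : q ≠ 0 := hα j₀
  obtain ⟨p, hp, hpq⟩ := exists_ne_zero_inner_eq_zero (𝕜 := 𝕜) q
  set A : E → Finset ι := fun v => {j ∈ s | ⟪v, α j⟫_𝕜 = 0}
  set U := span 𝕜 (β '' ↑(A p ∪ A q))
  set R := s \ (A p ∪ A q)
  have hAs : A p ∪ A q ⊆ s := union_subset (filter_subset _ s) (filter_subset _ s)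
  have hβU {j : ι} (hj : j ∈ A p ∪ A q) : β j ∈ U := subset_span ⟨j, hj, rfl⟩
  have hUV : U ≤ V := span_le.mpr <| by rintro - ⟨j, hj, rfl⟩; exact hsV j (hAs hj)
  have hRU {j : ι} (hj : j ∈ R) : β j ∈ Uᗮ :=
    (isOrtho_span_image_filter_union hα hs hp hq hpq).ge (subset_span ⟨j, hj, rfl⟩)
  have hcover {v w : E} (hAvw : A v ∪ A w = A p ∪ A q) (j : ι) (hj : j ∈ s) (hjv : j ∉ A v) :
      ⟪w, α j⟫_𝕜 = 0 ∨ β j ∈ Uᗮ := by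
    by_cases hjw : j ∈ A w
    · exact Or.inl (mem_filter.mp hjw).2
    · exact Or.inr (hRU (mem_sdiff.mpr ⟨hj, hAvw ▸ by simp [hjv, hjw]⟩))
  obtain hlt | hpU := lt_or_ge #(A p) (finrank 𝕜 U)
  · obtain ⟨y, hy, hy0, hxy⟩ := exists_productOrthogonal_of_card_lt_finrank hlt (hcover rfl)
    exact ⟨q, hq, y, hUV hy, hy0, hxy⟩
  obtain hlt | hqU := lt_or_ge #(A q) (finrank 𝕜 U)
  · obtain ⟨y, hy, hy0, hxy⟩ :=
      exists_productOrthogonal_of_card_lt_finrank hlt (hcover (union_comm _ _))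
    exact ⟨p, hp, y, hUV hy, hy0, hxy⟩
  -- Both classes now have at least `dim U` members, so `#R ≤ #s - 2 dim U < 2 dim (Uᗮ ⊓ V)`.
  have hdisj : Disjoint (A p) (A q) := disjoint_left.mpr fun j hjp hjq =>
    inner_ne_zero_of_inner_eq_zero hp hq (hα j) hpq (mem_filter.mp hjp).2 (mem_filter.mp hjq).2
  have hcardR : #R + (#(A p) + #(A q)) = #s := by
    rw [← card_union_of_disjoint hdisj, card_sdiff_add_card_eq_card hAs]
  have hdimV := finrank_add_inf_finrank_orthogonal hUV
  have hRs : R ⊂ s := sdiff_ssubset hAs ⟨j₀, mem_union_left _ (mem_filter.mpr ⟨hj₀, hpq⟩)⟩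
  obtain ⟨x, hx, y, hy, hy0, hxy⟩ := ih R hRs (Uᗮ ⊓ V)
    (fun j hj => ⟨hRU hj, hsV j (hRs.subset hj)⟩)
    (hs.mono (coe_subset.mpr hRs.subset)) (by omega)
  refine ⟨x, hx, y, hy.2, hy0, fun j hj => ?_⟩
  by_cases hjR : j ∈ R
  · exact hxy j hjR
  · have hj' : j ∈ A p ∪ A q := of_not_not fun h => hjR (mem_sdiff.mpr ⟨hj, h⟩)
    exact Or.inr (inner_left_of_mem_orthogonal (hβU hj') hy.1)

theorem exists_productOrthogonal_of_card_lt [Fintype ι] [Fact (finrank 𝕜 E = 2)]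
    [FiniteDimensional 𝕜 F] {α : ι → E} {β : ι → F} (hα : ∀ j, α j ≠ 0)
    (h : Pairwise fun j l => ProductOrthogonal 𝕜 (α j) (β j) (α l) (β l))
    (hcard : Fintype.card ι < 2 * finrank 𝕜 F) :
    ∃ x ≠ 0, ∃ y ≠ 0, ∀ j, ProductOrthogonal 𝕜 x y (α j) (β j) := by
  obtain ⟨x, hx, y, -, hy, hxy⟩ := exists_productOrthogonal_mem_of_card_lt hα univ ⊤
    (fun _ _ => mem_top) (fun j _ l _ hjl => h hjl) (by rwa [card_univ, finrank_top])
  exact ⟨x, hx, y, hy, fun j => hxy j (mem_univ j)⟩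

theorem pairwise_productOrthogonal_snoc {N : ℕ} {a : Fin N → E} {b : Fin N → F} {x : E} {y : F}
    (hab : Pairwise fun s t => ProductOrthogonal 𝕜 (a s) (b s) (a t) (b t))
    (hxy : ∀ t, ProductOrthogonal 𝕜 x y (a t) (b t)) :
    Pairwise fun s t => ProductOrthogonal 𝕜 (Fin.snoc (α := fun _ => E) a x s)
      (Fin.snoc (α := fun _ => F) b y s) (Fin.snoc (α := fun _ => E) a x t)
      (Fin.snoc (α := fun _ => F) b y t) := by
  intro s t hst
  induction s using Fin.lastCases <;> induction t using Fin.lastCases <;>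
    simp only [Fin.snoc_last, Fin.snoc_castSucc]
  · exact absurd rfl hst
  · exact hxy _
  · exact (hxy _).symm
  · exact hab (fun h => hst (congrArg _ h))

theorem exists_productOrthogonal_completion [Fact (finrank 𝕜 E = 2)] [FiniteDimensional 𝕜 F]
    {k N : ℕ} (hkN : k ≤ N) (hN : N ≤ 2 * finrank 𝕜 F) (α : Fin k → E) (β : Fin k → F)
    (hα : ∀ j, ‖α j‖ = 1) (hβ : ∀ j, ‖β j‖ = 1)
    (h : Pairwise fun j l => ProductOrthogonal 𝕜 (α j) (β j) (α l) (β l)) :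
    ∃ (a : Fin N → E) (b : Fin N → F) (e : Fin k ↪ Fin N),
      (∀ t, ‖a t‖ = 1) ∧ (∀ t, ‖b t‖ = 1) ∧
      (Pairwise fun s t => ProductOrthogonal 𝕜 (a s) (b s) (a t) (b t)) ∧
      ∀ j, a (e j) = α j ∧ b (e j) = β j := by
  induction N, hkN using Nat.le_induction with
  | base => exact ⟨α, β, .refl _, hα, hβ, h, fun _ => ⟨rfl, rfl⟩⟩
  | succ N hkN ih =>
    obtain ⟨a, b, e, ha, hb, hab, hae⟩ := ih (by omega)
    have ha0 (t : Fin N) : a t ≠ 0 := norm_ne_zero_iff.mp (by simp [ha])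
    obtain ⟨x, hx, y, hy, hxy⟩ := exists_productOrthogonal_of_card_lt ha0 hab
      (by rw [Fintype.card_fin]; omega)
    refine ⟨Fin.snoc a ((‖x‖⁻¹ : 𝕜) • x), Fin.snoc b ((‖y‖⁻¹ : 𝕜) • y), e.trans Fin.castSuccEmb,
      Fin.lastCases ?_ ?_, Fin.lastCases ?_ ?_,
      pairwise_productOrthogonal_snoc hab fun t => (hxy t).smul _ _, fun j => ?_⟩ <;>
      simp [norm_smul_inv_norm, hx, hy, ha, hb, hae]

theorem stmt10_general (nB k : ℕ)
    (α : Fin k → EuclideanSpace ℂ (Fin 2)) (β : Fin k → EuclideanSpace ℂ (Fin nB))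
    (hunitα : ∀ j, ‖α j‖ = 1) (hunitβ : ∀ j, ‖β j‖ = 1)
    (horth : ∀ j l : Fin k, j ≠ l →
      (inner ℂ (α j) (α l) : ℂ) = 0 ∨ (inner ℂ (β j) (β l) : ℂ) = 0) :
    (∃ (a : Fin (2 * nB) → EuclideanSpace ℂ (Fin 2))
      (b : Fin (2 * nB) → EuclideanSpace ℂ (Fin nB))
      (e : Fin k ↪ Fin (2 * nB)),
      (∀ t, ‖a t‖ = 1) ∧ (∀ t, ‖b t‖ = 1) ∧
      (∀ s t : Fin (2 * nB), s ≠ t →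
        (inner ℂ (a s) (a t) : ℂ) = 0 ∨ (inner ℂ (b s) (b t) : ℂ) = 0) ∧
      (∀ j, a (e j) = α j ∧ b (e j) = β j)) ∧
    (k < 2 * nB →
      ∃ (x : EuclideanSpace ℂ (Fin 2)) (y : EuclideanSpace ℂ (Fin nB)),
        x ≠ 0 ∧ y ≠ 0 ∧
        ∀ j, (inner ℂ x (α j) : ℂ) = 0 ∨ (inner ℂ y (β j) : ℂ) = 0) := by
  have : Fact (finrank ℂ (EuclideanSpace ℂ (Fin 2)) = 2) := ⟨finrank_euclideanSpace_fin⟩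
  have hdim : finrank ℂ (EuclideanSpace ℂ (Fin nB)) = nB := finrank_euclideanSpace_fin
  have hα0 (j : Fin k) : α j ≠ 0 := norm_ne_zero_iff.mp (by simp [hunitα])
  have hβ0 (j : Fin k) : β j ≠ 0 := norm_ne_zero_iff.mp (by simp [hunitβ])
  have hk : k ≤ 2 * nB := by
    simpa [Fact.out, hdim] using card_le_finrank_mul_finrank (𝕜 := ℂ) hα0 hβ0 horth
  refine ⟨exists_productOrthogonal_completion hk (by rw [hdim]) α β hunitα hunitβ horth,
    fun hlt => ?_⟩
  obtain ⟨x, hx, y, hy, hxy⟩ := exists_productOrthogonal_of_card_lt (𝕜 := ℂ) hα0 horth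
    (by rwa [Fintype.card_fin, hdim])
  exact ⟨x, y, hx, hy, hxy⟩

/-- Any set of mutually orthogonal product vectors α_j ⊗ β_j in ℂ² ⊗ ℂⁿ (n ≥ 2,
unit factors) is completable to a full orthogonal product basis of ℂ² ⊗ ℂⁿ;
in particular, if the set has fewer than 2n members it is extendible by a
nonzero product vector, so there is no UPB in ℂ² ⊗ ℂⁿ. -/
theorem stmt10 (nB k : ℕ) (hB : 2 ≤ nB)
    (α : Fin k → EuclideanSpace ℂ (Fin 2)) (β : Fin k → EuclideanSpace ℂ (Fin nB))
    (hunitα : ∀ j, ‖α j‖ = 1) (hunitβ : ∀ j, ‖β j‖ = 1)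
    (horth : ∀ j l : Fin k, j ≠ l →
      (inner ℂ (α j) (α l) : ℂ) = 0 ∨ (inner ℂ (β j) (β l) : ℂ) = 0) :
    (∃ (a : Fin (2 * nB) → EuclideanSpace ℂ (Fin 2))
      (b : Fin (2 * nB) → EuclideanSpace ℂ (Fin nB))
      (e : Fin k ↪ Fin (2 * nB)),
      (∀ t, ‖a t‖ = 1) ∧ (∀ t, ‖b t‖ = 1) ∧
      (∀ s t : Fin (2 * nB), s ≠ t →
        (inner ℂ (a s) (a t) : ℂ) = 0 ∨ (inner ℂ (b s) (b t) : ℂ) = 0) ∧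
      (∀ j, a (e j) = α j ∧ b (e j) = β j)) ∧
    (k < 2 * nB →
      ∃ (x : EuclideanSpace ℂ (Fin 2)) (y : EuclideanSpace ℂ (Fin nB)),
        x ≠ 0 ∧ y ≠ 0 ∧
        ∀ j, (inner ℂ x (α j) : ℂ) = 0 ∨ (inner ℂ y (β j) : ℂ) = 0) :=
  stmt10_general nB k α β hunitα hunitβ horth
end

section
/- For a UPB with n+1 members in (ℂ²)^{⊗n} (the minimal number for n qubits), the orthogonality graph has exactly one edge of each color at every vertex; consequently, if n is even, no UPB with n+1 members exists in (ℂ²)^{⊗n}. -/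
/-!
Vectors of `ℂ²` orthogonal to a nonzero vector form a line. So if two edges of colour `i` left
a member `j`, the two neighbours would carry parallel local states at party `i`; giving party `i`
to both of them and one further party to each of the other `n - 1` members yields a nonzero
product vector orthogonal to the whole set. Hence each colour class of an unextendible set is a
partial matching. Each of the `(n + 1) n` ordered pairs of distinct members is coloured by one of
`n` colours, so counting makes every colour class a perfect matching on `n + 1` vertices, which
forces `n + 1` to be even.
-/

open Module Submodule
open scoped InnerProductSpace

section InnerProductSpace

variable (𝕜 : Type*) {E : Type*} [RCLike 𝕜] [NormedAddCommGroup E] [InnerProductSpace 𝕜 E]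

/-- `φ i j` is the local state of member `j` at party `i`; the set is extendible when a nonzero
product vector `⊗ᵢ χ i` is orthogonal to every member. -/
def IsExtendible {ι κ : Type*} (φ : ι → κ → E) : Prop :=
  ∃ χ : ι → E, (∀ i, χ i ≠ 0) ∧ ∀ j, ∃ i, ⟪χ i, φ i j⟫_𝕜 = 0

def orthogonalityGraph {κ : Type*} (v : κ → E) : SimpleGraph κ where
  Adj j k := j ≠ k ∧ ⟪v j, v k⟫_𝕜 = 0
  symm := ⟨fun _ _ h => ⟨h.1.symm, inner_eq_zero_symm.1 h.2⟩⟩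
  loopless := ⟨fun _ h => h.1 rfl⟩

variable {𝕜}

theorem orthogonalityGraph_adj {κ : Type*} {v : κ → E} {j k : κ} :
    (orthogonalityGraph 𝕜 v).Adj j k ↔ j ≠ k ∧ ⟪v j, v k⟫_𝕜 = 0 :=
  Iff.rfl

theorem exists_ne_zero_inner_eq_zero_s12 [FiniteDimensional 𝕜 E] (hE : 2 ≤ finrank 𝕜 E) (v : E) :
    ∃ w ≠ (0 : E), ⟪w, v⟫_𝕜 = 0 := by
  have hbot : (𝕜 ∙ v)ᗮ ≠ ⊥ := by
    rw [Ne, orthogonal_eq_bot_iff]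
    intro htop
    have hle := finrank_span_le_card (R := 𝕜) ({v} : Set E)
    rw [htop, finrank_top, Set.toFinset_singleton, Finset.card_singleton] at hle
    omega
  obtain ⟨w, hw, hw0⟩ := exists_mem_ne_zero_of_ne_bot hbot
  exact ⟨w, hw0, mem_orthogonal_singleton_iff_inner_left.1 hw⟩

/-- A case of the partition criterion: party `i` serves both `τ i` and `l`, and every other
member is served by a party `τ` sends to it. -/
theorem isExtendible_of_mem_span {ι κ : Type*} [FiniteDimensional 𝕜 E] (hE : 2 ≤ finrank 𝕜 E)
    (φ : ι → κ → E) (τ : ι → κ) {l : κ} (hτ : ∀ j, j ≠ l → j ∈ Set.range τ) {i : ι}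
    (hl : φ i l ∈ 𝕜 ∙ φ i (τ i)) : IsExtendible 𝕜 φ := by
  choose χ hχ0 hχ using fun i => exists_ne_zero_inner_eq_zero_s12 hE (φ i (τ i))
  refine ⟨χ, hχ0, fun j => ?_⟩
  by_cases hj : j = l
  · obtain ⟨t, ht⟩ := mem_span_singleton.1 hl
    exact ⟨i, by rw [hj, ← ht, inner_smul_right, hχ, mul_zero]⟩
  · obtain ⟨i', rfl⟩ := hτ j hj
    exact ⟨i', hχ i'⟩

end InnerProductSpace

theorem Fintype.exists_rel_of_functional_of_cover {ι κ : Type*} [Fintype ι] [Fintype κ]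
    (hcard : Fintype.card ι + 1 ≤ Fintype.card κ) (R : ι → κ → κ → Prop)
    (hcover : ∀ j k, j ≠ k → ∃ i, R i j k) (hfun : ∀ i j k k', R i j k → R i j k' → k = k')
    (i : ι) (j : κ) : ∃ k, R i j k := by
  classical
  have : Nonempty ι := ⟨i⟩
  choose! c hc using hcover
  have hsurj := Finset.surjOn_of_injOn_of_card_le (s := (Finset.univ : Finset κ).offDiag)
    (t := Finset.univ) (fun p => (c p.1 p.2, p.1)) (fun _ _ => Finset.mem_univ _) ?_ ?_
  · obtain ⟨⟨j', k⟩, hp, he⟩ := hsurj (Finset.mem_univ (i, j))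
    obtain ⟨rfl, rfl⟩ := Prod.mk.injEq _ _ _ _ ▸ he
    exact ⟨k, hc _ _ (Finset.mem_offDiag.1 hp).2.2⟩
  · rintro ⟨j, k⟩ hp ⟨j', k'⟩ hp' he
    simp only [Finset.coe_offDiag, Set.mem_offDiag, Prod.mk.injEq] at hp hp' he
    obtain ⟨hc', rfl⟩ := he
    exact Prod.ext rfl (hfun _ _ _ _ (hc _ _ hp.2.2) (hc' ▸ hc _ _ hp'.2.2))
  · rw [Finset.offDiag_card, Finset.card_univ, Finset.card_univ, Fintype.card_prod,
      Nat.le_sub_iff_add_le (Nat.le_mul_self _)]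
    nlinarith

theorem Fin.exists_range_superset_compl {n : ℕ} {k l : Fin (n + 1)} (hkl : k ≠ l) (i : Fin n) :
    ∃ τ : Fin n → Fin (n + 1), τ i = k ∧ ∀ j, j ≠ l → j ∈ Set.range τ := by
  obtain ⟨z, hz⟩ := Fin.exists_succAbove_eq hkl
  refine ⟨l.succAbove ∘ Equiv.swap i z, by simpa using hz, fun j hj => ?_⟩
  obtain ⟨z', rfl⟩ := Fin.exists_succAbove_eq hj
  exact ⟨Equiv.swap i z z', by simp⟩

section Unextendible

variable {𝕜 E : Type*} [RCLike 𝕜] [NormedAddCommGroup E] [InnerProductSpace 𝕜 E]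
  [Fact (finrank 𝕜 E = 2)] {n : ℕ} {φ : Fin n → Fin (n + 1) → E}

theorem notMem_span_of_not_isExtendible (hupb : ¬ IsExtendible 𝕜 φ) {k l : Fin (n + 1)}
    (hkl : k ≠ l) (i : Fin n) : φ i l ∉ 𝕜 ∙ φ i k := by
  have : FiniteDimensional 𝕜 E := .of_fact_finrank_eq_succ 1
  obtain ⟨τ, rfl, hτ⟩ := Fin.exists_range_superset_compl hkl i
  exact fun hl => hupb <| isExtendible_of_mem_span (Fact.out : finrank 𝕜 E = 2).ge φ τ hτ hl

theorem eq_of_inner_eq_zero_of_not_isExtendible (hne : ∀ i j, φ i j ≠ 0)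
    (hupb : ¬ IsExtendible 𝕜 φ) {i : Fin n} {j k l : Fin (n + 1)}
    (hk : ⟪φ i j, φ i k⟫_𝕜 = 0) (hl : ⟪φ i j, φ i l⟫_𝕜 = 0) : k = l := by
  by_contra hkl
  exact notMem_span_of_not_isExtendible hupb hkl i
    (mem_span_singleton_of_inner_eq_zero_of_inner_eq_zero (hne i j) (hne i k) hl hk)

theorem existsUnique_orthogonalityGraph_adj (hne : ∀ i j, φ i j ≠ 0)
    (hupb : ¬ IsExtendible 𝕜 φ) (horth : ∀ j k, j ≠ k → ∃ i, ⟪φ i j, φ i k⟫_𝕜 = 0)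
    (i : Fin n) (j : Fin (n + 1)) : ∃! k, (orthogonalityGraph 𝕜 (φ i)).Adj j k := by
  obtain ⟨k, hk⟩ := Fintype.exists_rel_of_functional_of_cover (by simp)
    (fun i j k => ⟪φ i j, φ i k⟫_𝕜 = 0) horth
    (fun _ _ _ _ => eq_of_inner_eq_zero_of_not_isExtendible hne hupb) i j
  refine ⟨k, orthogonalityGraph_adj.2 ⟨?_, hk⟩, fun l hl =>
    eq_of_inner_eq_zero_of_not_isExtendible hne hupb (orthogonalityGraph_adj.1 hl).2 hk⟩
  rintro rfl
  exact hne i j (inner_self_eq_zero.1 hk)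

end Unextendible

/-- For a UPB with n+1 members in (ℂ²)^{⊗n} (φ i j is the factor of state j held
by party i; nonzero factors, mutual orthogonality in some factor, and no nonzero
product vector orthogonal to all members): the orthogonality graph has exactly
one edge of each color at every vertex, and consequently n cannot be even. -/
theorem stmt12 (n : ℕ) (hn : 0 < n)
    (φ : Fin n → Fin (n + 1) → EuclideanSpace ℂ (Fin 2))
    (hne : ∀ i j, φ i j ≠ 0)
    (horth : ∀ j k : Fin (n + 1), j ≠ k → ∃ i, (inner ℂ (φ i j) (φ i k) : ℂ) = 0)
    (hupb : ¬ ∃ χ : Fin n → EuclideanSpace ℂ (Fin 2),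
        (∀ i, χ i ≠ 0) ∧ ∀ j : Fin (n + 1), ∃ i, (inner ℂ (χ i) (φ i j) : ℂ) = 0) :
    (∀ (i : Fin n) (j : Fin (n + 1)),
        ∃! k : Fin (n + 1), k ≠ j ∧ (inner ℂ (φ i j) (φ i k) : ℂ) = 0) ∧
    ¬ Even n := by
  have : Fact (finrank ℂ (EuclideanSpace ℂ (Fin 2)) = 2) := ⟨finrank_euclideanSpace_fin⟩
  have hadj := existsUnique_orthogonalityGraph_adj hne hupb horth
  refine ⟨fun i j => by simpa only [orthogonalityGraph_adj, ne_comm] using hadj i j,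
    fun heven => ?_⟩
  have hmatch : (⊤ : (orthogonalityGraph ℂ (φ ⟨0, hn⟩)).Subgraph).IsPerfectMatching :=
    SimpleGraph.Subgraph.isPerfectMatching_iff.2 fun j => by
      simpa only [SimpleGraph.Subgraph.top_adj] using hadj ⟨0, hn⟩ j
  have hcard := hmatch.even_card
  rw [Fintype.card_fin, Nat.even_add_one] at hcard
  exact hcard heven
end

section
/- Let p = 2n+1 be prime and define v_i = N_p(cos(2πi/p), sin(2πi/p), h_p) ∈ ℝ³ for i = 0,...,2n, where m satisfies π/2 ≤ 2πm/p ≤ π, h_p = √(−cos(2πm/p)), N_p = 1/√(1+|cos(2πm/p)|). Then v_i ⊥ v_j whenever i − j ≡ ±m (mod p), and any three distinct v_i are linearly independent. -/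
/-!
Writing `v_i = N (cos θ_i, sin θ_i, h)` with `θ_i = 2πi/p`, one has
`⟨v_i, v_j⟩ = N² (cos (θ_i - θ_j) + h²)`, and `h² = -cos (2πm/p)` makes this vanish when
`i - j ≡ ±m`. The determinant of three such vectors is
`4 N³ h sin ((θ_j - θ_i)/2) sin ((θ_k - θ_j)/2) sin ((θ_k - θ_i)/2)`; the half-differences lie
strictly between `-π` and `π`, and `h ≠ 0` because `2πm/p = π/2` would force `p = 4m`, which
is impossible for odd `p`.
-/

open Real

noncomputable def pyramidVec (N h θ : ℝ) : EuclideanSpace ℝ (Fin 3) :=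
  WithLp.toLp 2 ![N * cos θ, N * sin θ, N * h]

theorem inner_pyramidVec (N h a b : ℝ) :
    inner ℝ (pyramidVec N h a) (pyramidVec N h b) = N ^ 2 * (cos (a - b) + h ^ 2) := by
  simp only [pyramidVec, PiLp.inner_apply, RCLike.inner_apply, conj_trivial, Fin.sum_univ_three,
    Matrix.cons_val_zero, Matrix.cons_val_one, Matrix.cons_val_two, Matrix.tail_cons,
    Matrix.head_cons, cos_sub]
  ring

theorem sin_two_mul_add_sin_two_mul_sub_sin_add (u w : ℝ) :
    sin (2 * u) + sin (2 * w) - sin (2 * u + 2 * w) = 4 * sin (u + w) * sin u * sin w := by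
  simp only [sin_two_mul, cos_two_mul', sin_add]
  linear_combination (-2 * sin u * cos u) * sin_sq_add_cos_sq w
    - (2 * sin w * cos w) * sin_sq_add_cos_sq u

theorem det_pyramid_rows (N h a b c : ℝ) :
    (Matrix.of ![![N * cos a, N * sin a, N * h], ![N * cos b, N * sin b, N * h],
      ![N * cos c, N * sin c, N * h]]).det
      = 4 * N ^ 3 * h * sin ((b - a) / 2) * sin ((c - b) / 2) * sin ((c - a) / 2) := by
  have key := sin_two_mul_add_sin_two_mul_sub_sin_add ((b - a) / 2) ((c - b) / 2)
  rw [show 2 * ((b - a) / 2) = b - a by ring, show 2 * ((c - b) / 2) = c - b by ring,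
    show b - a + (c - b) = c - a by ring, show (b - a) / 2 + (c - b) / 2 = (c - a) / 2 by ring,
    sin_sub, sin_sub, sin_sub] at key
  simp only [Matrix.det_fin_three, Matrix.of_apply, Matrix.cons_val_zero, Matrix.cons_val_one,
    Matrix.cons_val_two, Matrix.tail_cons, Matrix.head_cons]
  linear_combination (N ^ 3 * h) * key

theorem linearIndependent_pyramidVec {N h : ℝ} (hN : N ≠ 0) (hh : h ≠ 0) {a b c : ℝ}
    (hab : sin ((b - a) / 2) ≠ 0) (hbc : sin ((c - b) / 2) ≠ 0) (hac : sin ((c - a) / 2) ≠ 0) :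
    LinearIndependent ℝ ![pyramidVec N h a, pyramidVec N h b, pyramidVec N h c] := by
  have hdet : (Matrix.of ![![N * cos a, N * sin a, N * h], ![N * cos b, N * sin b, N * h],
      ![N * cos c, N * sin c, N * h]]).det ≠ 0 := by
    rw [det_pyramid_rows]
    positivity
  have hrows := Matrix.linearIndependent_rows_iff_isUnit.2
    ((Matrix.isUnit_iff_isUnit_det _).2 hdet.isUnit)
  convert hrows.map' (WithLp.linearEquiv 2 ℝ (Fin 3 → ℝ)).symm.toLinearMap (LinearEquiv.ker _)
    using 1
  · ext r : 1
    fin_cases r <;> rfl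
  · rfl

theorem sin_half_sub_ne_zero {p : ℕ} {i j : Fin p} (hij : i ≠ j) :
    sin ((2 * π * (j : ℕ) / p - 2 * π * (i : ℕ) / p) / 2) ≠ 0 := by
  have hp : (0 : ℝ) < p := by exact_mod_cast i.pos
  have hi : ((i : ℕ) : ℝ) < p := by exact_mod_cast i.isLt
  have hj : ((j : ℕ) : ℝ) < p := by exact_mod_cast j.isLt
  have hne : ((i : ℕ) : ℝ) ≠ (j : ℕ) := by exact_mod_cast Fin.val_ne_of_ne hij
  rw [show (2 * π * (j : ℕ) / p - 2 * π * (i : ℕ) / p) / 2 = π * ((j : ℕ) - (i : ℕ)) / p by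
    field_simp]
  rw [Ne, sin_eq_zero_iff_of_lt_of_lt]
  · exact div_ne_zero (mul_ne_zero pi_ne_zero (sub_ne_zero.2 hne.symm)) hp.ne'
  · rw [lt_div_iff₀ hp]
    nlinarith [mul_pos pi_pos (show (0 : ℝ) < p - i + j by linarith)]
  · rw [div_lt_iff₀ hp]
    nlinarith [mul_pos pi_pos (show (0 : ℝ) < p - j + i by linarith)]

theorem cos_sub_eq_of_add_mod {p m i j : ℕ} (hij : (i + m) % p = j) :
    cos (2 * π * i / p - 2 * π * j / p) = cos (2 * π * m / p) := by
  rcases Nat.eq_zero_or_pos p with rfl | hp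
  · simp
  obtain ⟨q, hq⟩ : ∃ q, i + m = p * q + j := ⟨_, (hij ▸ Nat.div_add_mod (i + m) p).symm⟩
  have hdiv : ((i : ℝ) + m) = p * q + j := by exact_mod_cast hq
  have hangle : 2 * π * i / p - 2 * π * j / p = -(2 * π * m / p) + (q : ℤ) * (2 * π) := by
    push_cast
    field_simp
    linear_combination hdiv
  rw [hangle, cos_add_int_mul_two_pi, cos_neg]

theorem cos_two_pi_mul_div_neg {p m : ℕ} (hp : Odd p) (hm1 : π / 2 ≤ 2 * π * m / p)
    (hm2 : 2 * π * m / p ≤ π) : cos (2 * π * m / p) < 0 := by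
  refine cos_neg_of_pi_div_two_lt_of_lt (lt_of_le_of_ne hm1 fun heq => ?_) (by linarith [pi_pos])
  have hp0 : (p : ℝ) ≠ 0 := by exact_mod_cast hp.pos.ne'
  have h4m : (p : ℝ) = 4 * m := by
    field_simp at heq
    nlinarith [pi_pos]
  have : p = 4 * m := by exact_mod_cast h4m
  exact Nat.not_even_iff_odd.2 hp ⟨2 * m, by omega⟩

theorem stmt15_general (nn p m : ℕ) (hp : p = 2 * nn + 1)
    (hm1 : Real.pi / 2 ≤ 2 * Real.pi * m / p) (hm2 : 2 * Real.pi * m / p ≤ Real.pi)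
    (h N : ℝ)
    (hh : h = Real.sqrt (-(Real.cos (2 * Real.pi * m / p))))
    (hN : N = 1 / Real.sqrt (1 + |Real.cos (2 * Real.pi * m / p)|))
    (v : Fin p → EuclideanSpace ℝ (Fin 3))
    (hv : ∀ i : Fin p,
      v i = ![N * Real.cos (2 * Real.pi * (i : ℕ) / p),
              N * Real.sin (2 * Real.pi * (i : ℕ) / p),
              N * h]) :
    (∀ i j : Fin p, (((i : ℕ) + m) % p = (j : ℕ) ∨ ((j : ℕ) + m) % p = (i : ℕ)) →
      (inner ℝ (v i) (v j) : ℝ) = 0) ∧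
    (∀ i j k : Fin p, i ≠ j → i ≠ k → j ≠ k →
      LinearIndependent ℝ ![v i, v j, v k]) := by
  have hcos : cos (2 * π * m / p) < 0 := cos_two_pi_mul_div_neg ⟨nn, hp⟩ hm1 hm2
  have hv' : ∀ i, v i = pyramidVec N h (2 * π * (i : ℕ) / p) :=
    fun i => WithLp.ofLp_injective 2 (hv i)
  refine ⟨?_, fun i j k hij hik hjk => ?_⟩
  · have hh2 : h ^ 2 = -cos (2 * π * m / p) := by rw [hh, sq_sqrt (by linarith)]
    have hperp : ∀ i j : Fin p, ((i : ℕ) + m) % p = j → inner ℝ (v i) (v j) = (0 : ℝ) := by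
      intro i j hij
      rw [hv', hv', inner_pyramidVec, cos_sub_eq_of_add_mod hij, hh2]
      ring
    rintro i j (hij | hji)
    · exact hperp i j hij
    · rw [real_inner_comm]
      exact hperp j i hji
  · have hN0 : N ≠ 0 := by rw [hN]; positivity
    have hh0 : h ≠ 0 := by rw [hh]; exact (sqrt_pos.2 (by linarith)).ne'
    rw [hv', hv', hv']
    exact linearIndependent_pyramidVec hN0 hh0 (sin_half_sub_ne_zero hij)
      (sin_half_sub_ne_zero hjk) (sin_half_sub_ne_zero hik)

/-- GenPyramid vectors: for a prime p = 2n+1 and m with π/2 ≤ 2πm/p ≤ π, the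
vectors v_i = N_p(cos(2πi/p), sin(2πi/p), h_p) with h_p = √(−cos(2πm/p)),
N_p = 1/√(1+|cos(2πm/p)|), satisfy v_i ⊥ v_j whenever i − j ≡ ±m (mod p), and
any three distinct ones are linearly independent. -/
theorem stmt15 (nn p m : ℕ) (hp : p = 2 * nn + 1) (hprime : Nat.Prime p)
    (hm1 : Real.pi / 2 ≤ 2 * Real.pi * m / p) (hm2 : 2 * Real.pi * m / p ≤ Real.pi)
    (h N : ℝ)
    (hh : h = Real.sqrt (-(Real.cos (2 * Real.pi * m / p))))
    (hN : N = 1 / Real.sqrt (1 + |Real.cos (2 * Real.pi * m / p)|))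
    (v : Fin p → EuclideanSpace ℝ (Fin 3))
    (hv : ∀ i : Fin p,
      v i = ![N * Real.cos (2 * Real.pi * (i : ℕ) / p),
              N * Real.sin (2 * Real.pi * (i : ℕ) / p),
              N * h]) :
    (∀ i j : Fin p, (((i : ℕ) + m) % p = (j : ℕ) ∨ ((j : ℕ) + m) % p = (i : ℕ)) →
      (inner ℝ (v i) (v j) : ℝ) = 0) ∧
    (∀ i j k : Fin p, i ≠ j → i ≠ k → j ≠ k →
      LinearIndependent ℝ ![v i, v j, v k]) :=
  stmt15_general nn p m hp hm1 hm2 h N hh hN v hv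
end
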